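/- arXiv:2605.08263 — 5 statements merged into one kernel-verified Lean document; each statement's English description precedes it below -/
import Mathlib

section
/- Let X ∈ ℝ^{m₁} and Y ∈ ℝ^{m₂} be independent random vectors. Suppose X is PRDS on an index set I_X ⊆ {1,…,m₁}, meaning that for every increasing (upward closed) measurable set D' ⊆ ℝ^{m₁} and every i ∈ I_X, the map x ↦ P(X ∈ D' | X_i = x) is non-decreasing. Then for every increasing measurable set D ⊆ ℝ^{m₁+m₂} and every i ∈ I_X, the map x ↦ P((X,Y) ∈ D | X_i = x) is non-decreasing. By symmetry, the concatenated vector Z = (X,Y) is PRDS on I_X ∪ (m₁ + I_Y) whenever X is PRDS on I_X and Y is PRDS on I_Y. -/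
open MeasureTheory ProbabilityTheory
open scoped ENNReal

lemma null_of_forall_Ici (ν : Measure ℝ) (S : Set ℝ)
    (h : ∀ x ∈ S, ν (S ∩ Set.Ici x) = 0) : ν S = 0 := by
  classical
  set T : ℚ → Set ℝ := fun r =>
    if h' : (S ∩ Set.Iic (r : ℝ)).Nonempty then S ∩ Set.Ici h'.some else ∅ with hT
  have hTnull : ∀ r, ν (T r) = 0 := by
    intro r
    rw [hT]
    by_cases h' : (S ∩ Set.Iic (r : ℝ)).Nonempty
    · simp only [dif_pos h']
      exact h _ h'.some_mem.1
    · simp [dif_neg h']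
  set M : Set ℝ := {t | t ∈ S ∧ ∀ x ∈ S, t ≤ x} with hM
  have hMnull : ν M = 0 := by
    rcases Set.eq_empty_or_nonempty M with he | ⟨t₀, ht₀⟩
    · simp [he]
    · refine measure_mono_null ?_ (h t₀ ht₀.1)
      intro t ht; exact ⟨ht.1, ht₀.2 t ht.1⟩
  have hcover : S ⊆ (⋃ r : ℚ, T r) ∪ M := by
    intro t ht
    by_cases hmin : ∀ x ∈ S, t ≤ x
    · exact Or.inr ⟨ht, hmin⟩
    · push_neg at hmin
      obtain ⟨x, hxS, hxt⟩ := hmin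
      obtain ⟨r, hr1, hr2⟩ := exists_rat_btwn hxt
      refine Or.inl (Set.mem_iUnion.2 ⟨r, ?_⟩)
      have h' : (S ∩ Set.Iic (r : ℝ)).Nonempty := ⟨x, hxS, hr1.le⟩
      rw [hT]
      simp only [dif_pos h']
      exact ⟨ht, le_trans (le_trans h'.some_mem.2 hr2.le) le_rfl⟩
  refine measure_mono_null hcover ?_
  refine le_antisymm (le_trans (measure_union_le _ _) ?_) (zero_le)
  rw [measure_iUnion_null hTnull, hMnull, add_zero]

lemma exists_monotone_ae_eq (ν : Measure ℝ) [IsFiniteMeasure ν] (Φ : ℝ → ℝ)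
    (h0 : ∀ x, 0 ≤ Φ x) (h1 : ∀ x, Φ x ≤ 1)
    (hess : ∀ᵐ p ∂(ν.prod ν), p.1 ≤ p.2 → Φ p.1 ≤ Φ p.2) :
    ∃ φ : ℝ → ℝ, Monotone φ ∧ φ =ᵐ[ν] Φ := by
  classical
  set S : ℝ → Set ℝ := fun x => {q : ℝ | ν {t | x ≤ t ∧ Φ t < q} ≠ 0} with hS
  set φ : ℝ → ℝ := fun x => sInf (insert 1 (S x)) with hφ
  have hbdd : ∀ x, ∀ q ∈ insert (1 : ℝ) (S x), 0 ≤ q := by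
    intro x q hq
    rcases hq with rfl | hq
    · norm_num
    · by_contra hlt
      push_neg at hlt
      apply hq
      have he : {t | x ≤ t ∧ Φ t < q} = ∅ := by
        ext t
        simp only [Set.mem_setOf_eq, Set.mem_empty_iff_false, iff_false, not_and, not_lt]
        intro _
        exact le_trans hlt.le (h0 t)
      simp [he]
  have hmono : Monotone φ := by
    intro a b hab
    refine csInf_le_csInf ⟨0, fun q hq => hbdd a q hq⟩ ⟨1, Set.mem_insert _ _⟩ ?_
    intro q hq
    rcases hq with rfl | hq
    · exact Set.mem_insert _ _
    · refine Set.mem_insert_of_mem _ ?_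
      intro h0'
      apply hq
      refine measure_mono_null ?_ h0'
      intro t ⟨ht1, ht2⟩
      exact ⟨le_trans hab ht1, ht2⟩
  have hge : ∀ᵐ a ∂ν, Φ a ≤ φ a := by
    have h2 := Measure.ae_ae_of_ae_prod hess
    filter_upwards [h2] with a ha
    have hnull : ν {t | a ≤ t ∧ Φ t < Φ a} = 0 := by
      have ha' := ha
      rw [ae_iff] at ha'
      refine measure_mono_null ?_ ha'
      intro t ⟨ht1, ht2⟩
      intro hc
      exact absurd (hc ht1) (not_le.mpr ht2)
    refine le_csInf ⟨1, Set.mem_insert _ _⟩ ?_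
    intro q hq
    rcases hq with rfl | hq
    · exact h1 a
    · by_contra hc
      push_neg at hc
      apply hq
      refine measure_mono_null ?_ hnull
      intro t ⟨ht1, ht2⟩
      exact ⟨ht1, lt_trans ht2 hc⟩
  have hle : ∀ᵐ a ∂ν, φ a ≤ Φ a := by
    have hB : ν {x | Φ x < φ x} = 0 := by
      have hsub : {x | Φ x < φ x} ⊆
          ⋃ q : ℚ, {x | Φ x < (q : ℝ) ∧ ν {t | x ≤ t ∧ Φ t < (q : ℝ)} = 0} := by
        intro x hx
        simp only [Set.mem_setOf_eq] at hx
        obtain ⟨q, hq1, hq2⟩ := exists_rat_btwn hx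
        refine Set.mem_iUnion.2 ⟨q, hq1, ?_⟩
        by_contra hc
        have : (q : ℝ) ∈ S x := hc
        have := csInf_le ⟨0, fun q' hq' => hbdd x q' hq'⟩ (Set.mem_insert_of_mem _ this)
        exact absurd (lt_of_lt_of_le hq2 this) (lt_irrefl _)
      refine measure_mono_null hsub (measure_iUnion_null ?_)
      intro q
      refine null_of_forall_Ici ν _ ?_
      intro x hx
      refine measure_mono_null ?_ hx.2
      intro t ⟨ht1, ht2⟩
      exact ⟨ht2, ht1.1⟩
    rw [ae_iff]
    refine measure_mono_null ?_ hB
    intro a ha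
    simpa [not_le] using ha
  refine ⟨φ, hmono, ?_⟩
  filter_upwards [hge, hle] with a h1' h2'
  exact le_antisymm h2' h1'

/-- A random vector `X : Ω → ι → ℝ` is PRDS on `I ⊆ ι`: for every increasing
measurable set `D` and every `i ∈ I`, the conditional probability
`P(X ∈ D | X_i = x)` is a non-decreasing function of `x` (expressed via a monotone
version of the conditional expectation of the indicator given `σ(X_i)`). -/
def PRDS {Ω : Type*} [MeasurableSpace Ω] (μ : Measure Ω)
    {ι : Type*} (X : Ω → ι → ℝ) (I : Set ι) : Prop :=
  ∀ D : Set (ι → ℝ), MeasurableSet D → (∀ a b, a ∈ D → a ≤ b → b ∈ D) →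
    ∀ i ∈ I, ∃ φ : ℝ → ℝ, Monotone φ ∧
      μ[fun ω => D.indicator (fun _ => (1 : ℝ)) (X ω) |
          MeasurableSpace.comap (fun ω => X ω i) inferInstance]
        =ᵐ[μ] fun ω => φ (X ω i)

lemma aux_prds {Ω : Type*} [MeasurableSpace Ω] (μ : Measure Ω) [IsProbabilityMeasure μ]
    {m m' n : ℕ} (X : Ω → Fin m → ℝ) (Y : Ω → Fin m' → ℝ)
    (hX : Measurable X) (hY : Measurable Y) (hindep : IndepFun X Y μ)
    {I : Set (Fin m)} (hprds : PRDS μ X I)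
    (J : (Fin m → ℝ) → (Fin m' → ℝ) → (Fin n → ℝ))
    (hJ : Measurable (Function.uncurry J))
    (hJmono : ∀ y, Monotone (fun x => J x y))
    (D : Set (Fin n → ℝ)) (hD : MeasurableSet D)
    (hDinc : ∀ a b, a ∈ D → a ≤ b → b ∈ D)
    {i : Fin m} (hi : i ∈ I) :
    ∃ φ : ℝ → ℝ, Monotone φ ∧
      μ[fun ω => D.indicator (fun _ => (1 : ℝ)) (J (X ω) (Y ω)) |
          MeasurableSpace.comap (fun ω => X ω i) inferInstance]
        =ᵐ[μ] fun ω => φ (X ω i) := by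
  classical
  set Xi : Ω → ℝ := fun ω => X ω i with hXi_def
  have hXi : Measurable Xi := (measurable_pi_apply i).comp hX
  set ν : Measure ℝ := μ.map Xi with hν
  set μY : Measure (Fin m' → ℝ) := μ.map Y with hμY
  haveI : IsProbabilityMeasure ν := Measure.isProbabilityMeasure_map hXi.aemeasurable
  haveI : IsProbabilityMeasure μY := Measure.isProbabilityMeasure_map hY.aemeasurable
  set κ := condDistrib X Xi μ with hκ
  set Dsec : (Fin m' → ℝ) → Set (Fin m → ℝ) := fun y => (fun x => J x y) ⁻¹' D with hDsec
  have hJy : ∀ y, Measurable (fun x => J x y) := fun y =>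
    hJ.comp (measurable_id.prodMk measurable_const)
  have hDsecm : ∀ y, MeasurableSet (Dsec y) := fun y => (hJy y) hD
  have hDsecinc : ∀ y, ∀ a b, a ∈ Dsec y → a ≤ b → b ∈ Dsec y :=
    fun y a b ha hab => hDinc _ _ ha (hJmono y hab)
  -- joint measurability of (x, y) ↦ κ x (Dsec y)
  have hG : Measurable (fun p : ℝ × (Fin m' → ℝ) => κ p.1 (Dsec p.2)) := by
    have ht : MeasurableSet {q : (ℝ × (Fin m' → ℝ)) × (Fin m → ℝ) | J q.2 q.1.2 ∈ D} :=
      (hJ.comp (measurable_snd.prodMk measurable_fst.snd)) hD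
    have h := Kernel.measurable_kernel_prodMk_left
      (κ := Kernel.prodMkRight (Fin m' → ℝ) κ) ht
    simp only [Kernel.prodMkRight_apply] at h
    exact h
  -- per-y essential monotonicity
  have hay : ∀ y : Fin m' → ℝ,
      ∀ᵐ p ∂(ν.prod ν), p.1 ≤ p.2 → κ p.1 (Dsec y) ≤ κ p.2 (Dsec y) := by
    intro y
    obtain ⟨φy, hφym, hφy⟩ := hprds (Dsec y) (hDsecm y) (hDsecinc y) i hi
    have hind : (fun ω => (Dsec y).indicator (fun _ => (1 : ℝ)) (X ω))
        = (X ⁻¹' (Dsec y)).indicator (fun _ => (1 : ℝ)) := by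
      funext ω
      by_cases h : X ω ∈ Dsec y <;> simp [h, Set.indicator]
    rw [hind] at hφy
    have hcd := condDistrib_ae_eq_condExp (μ := μ) hXi hX (hDsecm y)
    have hae : (fun ω => (κ (Xi ω) (Dsec y)).toReal) =ᵐ[μ] fun ω => φy (Xi ω) :=
      hcd.trans hφy
    have hmeasset : MeasurableSet {x : ℝ | (κ x (Dsec y)).toReal = φy x} :=
      measurableSet_eq_fun ((Kernel.measurable_coe κ (hDsecm y)).ennreal_toReal)
        hφym.measurable
    have hν_ae : ∀ᵐ x ∂ν, (κ x (Dsec y)).toReal = φy x := by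
      rw [hν, ae_map_iff hXi.aemeasurable hmeasset]
      exact hae
    have hN : ν {x : ℝ | ¬ ((κ x (Dsec y)).toReal = φy x)} = 0 := ae_iff.mp hν_ae
    have hpair : ∀ᵐ p : ℝ × ℝ ∂(ν.prod ν),
        ((κ p.1 (Dsec y)).toReal = φy p.1) ∧ ((κ p.2 (Dsec y)).toReal = φy p.2) := by
      rw [ae_iff]
      refine measure_mono_null (fun p hp => ?_) (?_ :
        (ν.prod ν) (({x : ℝ | ¬ ((κ x (Dsec y)).toReal = φy x)} ×ˢ Set.univ)
          ∪ (Set.univ ×ˢ {x : ℝ | ¬ ((κ x (Dsec y)).toReal = φy x)})) = 0)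
      · simp only [Set.mem_setOf_eq, not_and_or] at hp
        rcases hp with hp | hp
        · exact Or.inl ⟨hp, Set.mem_univ _⟩
        · exact Or.inr ⟨Set.mem_univ _, hp⟩
      · refine le_antisymm (le_trans (measure_union_le _ _) ?_) (zero_le)
        rw [Measure.prod_prod, Measure.prod_prod, hN]
        simp
    filter_upwards [hpair] with p hp hle
    obtain ⟨h1, h2⟩ := hp
    have hφ : φy p.1 ≤ φy p.2 := hφym hle
    rw [← h1, ← h2] at hφ
    exact (ENNReal.toReal_le_toReal (measure_ne_top _ _) (measure_ne_top _ _)).mp hφ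
  -- Fubini: joint a.e. monotonicity
  have hmeas_imp : MeasurableSet {z : (ℝ × ℝ) × (Fin m' → ℝ) |
      z.1.1 ≤ z.1.2 → κ z.1.1 (Dsec z.2) ≤ κ z.1.2 (Dsec z.2)} := by
    have h1 : MeasurableSet {z : (ℝ × ℝ) × (Fin m' → ℝ) | z.1.1 ≤ z.1.2} :=
      measurableSet_le measurable_fst.fst measurable_fst.snd
    have h2 : MeasurableSet {z : (ℝ × ℝ) × (Fin m' → ℝ) |
        κ z.1.1 (Dsec z.2) ≤ κ z.1.2 (Dsec z.2)} :=
      measurableSet_le (hG.comp (measurable_fst.fst.prodMk measurable_snd))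
        (hG.comp (measurable_fst.snd.prodMk measurable_snd))
    have : {z : (ℝ × ℝ) × (Fin m' → ℝ) |
        z.1.1 ≤ z.1.2 → κ z.1.1 (Dsec z.2) ≤ κ z.1.2 (Dsec z.2)}
        = {z | z.1.1 ≤ z.1.2}ᶜ ∪ {z | κ z.1.1 (Dsec z.2) ≤ κ z.1.2 (Dsec z.2)} := by
      ext z
      simp [imp_iff_not_or]
    rw [this]
    exact h1.compl.union h2
  have hjoint : ∀ᵐ p ∂(ν.prod ν), ∀ᵐ y ∂μY,
      p.1 ≤ p.2 → κ p.1 (Dsec y) ≤ κ p.2 (Dsec y) := by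
    exact (Measure.ae_ae_comm (μ := ν.prod ν) (ν := μY)
      (p := fun p y => p.1 ≤ p.2 → κ p.1 (Dsec y) ≤ κ p.2 (Dsec y)) hmeas_imp).mpr
      (Filter.Eventually.of_forall hay)
  -- definition of Φ
  set Ψ : ℝ → ℝ≥0∞ := fun x => ∫⁻ y, κ x (Dsec y) ∂μY with hΨdef
  have hΨmeas : Measurable Ψ := Measurable.lintegral_prod_right' hG
  have hΨle : ∀ x, Ψ x ≤ 1 := by
    intro x
    calc ∫⁻ y, κ x (Dsec y) ∂μY ≤ ∫⁻ _, 1 ∂μY := lintegral_mono fun y => prob_le_one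
    _ = 1 := by simp
  set Φ : ℝ → ℝ := fun x => (Ψ x).toReal with hΦdef
  have hΦmeas : Measurable Φ := hΨmeas.ennreal_toReal
  have hΦ0 : ∀ x, 0 ≤ Φ x := fun x => ENNReal.toReal_nonneg
  have hΦ1 : ∀ x, Φ x ≤ 1 := by
    intro x
    have := ENNReal.toReal_mono ENNReal.one_ne_top (hΨle x)
    simpa using this
  have hessΦ : ∀ᵐ p ∂(ν.prod ν), p.1 ≤ p.2 → Φ p.1 ≤ Φ p.2 := by
    filter_upwards [hjoint] with p hp hle
    have hΨm : Ψ p.1 ≤ Ψ p.2 := lintegral_mono_ae (hp.mono fun y h => h hle)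
    exact ENNReal.toReal_mono (lt_of_le_of_lt (hΨle _) ENNReal.one_lt_top).ne hΨm
  obtain ⟨φ, hφm, hφae⟩ := exists_monotone_ae_eq ν Φ hΦ0 hΦ1 hessΦ
  refine ⟨φ, hφm, ?_⟩
  -- rewrite the indicator
  have hZ : Measurable (fun ω => J (X ω) (Y ω)) := hJ.comp (hX.prodMk hY)
  have hfeq : (fun ω => D.indicator (fun _ => (1 : ℝ)) (J (X ω) (Y ω)))
      = Set.indicator ((fun ω => J (X ω) (Y ω)) ⁻¹' D) (fun _ => (1 : ℝ)) := by
    funext ω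
    by_cases h : J (X ω) (Y ω) ∈ D <;> simp [h, Set.indicator]
  rw [hfeq]
  haveI : SigmaFinite (μ.trim hXi.comap_le) := by infer_instance
  have hΦint : Integrable (fun ω => Φ (Xi ω)) μ := by
    refine Integrable.mono' (integrable_const 1)
      ((hΦmeas.comp hXi).aestronglyMeasurable) (Filter.Eventually.of_forall fun ω => ?_)
    rw [Real.norm_eq_abs, abs_of_nonneg (hΦ0 _)]
    exact hΦ1 _
  have hgoal : (fun ω => Φ (Xi ω)) =ᵐ[μ]
      μ[Set.indicator ((fun ω => J (X ω) (Y ω)) ⁻¹' D) (fun _ => (1 : ℝ)) |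
        MeasurableSpace.comap Xi inferInstance] := by
    refine ae_eq_condExp_of_forall_setIntegral_eq hXi.comap_le
      ((integrable_const (1 : ℝ)).indicator (hZ hD))
      (fun s _ _ => hΦint.integrableOn) ?_ ?_
    swap
    · exact (Measurable.stronglyMeasurable
        (hΦmeas.comp (Measurable.of_comap_le le_rfl))).aestronglyMeasurable
    intro s hs _
    obtain ⟨A, hA, rfl⟩ := hs
    -- RHS: integral of the indicator
    have hRHS : ∫ ω in Xi ⁻¹' A, Set.indicator ((fun ω => J (X ω) (Y ω)) ⁻¹' D)
        (fun _ => (1 : ℝ)) ω ∂μ = (μ (Xi ⁻¹' A ∩ (fun ω => J (X ω) (Y ω)) ⁻¹' D)).toReal := by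
      rw [integral_indicator (hZ hD), Measure.restrict_restrict (hZ hD), setIntegral_const]
      rw [smul_eq_mul, mul_one, Set.inter_comm, measureReal_def]
    -- LHS
    have hLHS : ∫ ω in Xi ⁻¹' A, Φ (Xi ω) ∂μ = ∫ x in A, Φ x ∂ν := by
      rw [hν, setIntegral_map hA hΦmeas.aestronglyMeasurable hXi.aemeasurable]
    have hLHS2 : ∫ x in A, Φ x ∂ν = (∫⁻ x in A, Ψ x ∂ν).toReal := by
      refine integral_toReal (hΨmeas.aemeasurable.restrict) ?_
      exact Filter.Eventually.of_forall fun x => lt_of_le_of_lt (hΨle x) ENNReal.one_lt_top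
    -- the measure identity
    have hswap : ∫⁻ x in A, Ψ x ∂ν = ∫⁻ y, ∫⁻ x in A, κ x (Dsec y) ∂ν ∂μY := by
      rw [hΨdef]
      exact lintegral_lintegral_swap (hG.aemeasurable)
    have hinner : ∀ y, ∫⁻ x in A, κ x (Dsec y) ∂ν = μ (Xi ⁻¹' A ∩ X ⁻¹' (Dsec y)) := by
      intro y
      rw [hν, setLIntegral_map hA (Kernel.measurable_coe κ (hDsecm y)) hXi]
      exact setLIntegral_preimage_condDistrib hXi hX.aemeasurable (hDsecm y) hA
    have hkey : ∫⁻ y, μ (Xi ⁻¹' A ∩ X ⁻¹' (Dsec y)) ∂μY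
        = μ (Xi ⁻¹' A ∩ (fun ω => J (X ω) (Y ω)) ⁻¹' D) := by
      set S : Set ((Fin m → ℝ) × (Fin m' → ℝ)) := {p | p.1 i ∈ A ∧ J p.1 p.2 ∈ D} with hSdef
      have hSm : MeasurableSet S :=
        (((measurable_pi_apply i).comp measurable_fst) hA).inter (hJ hD)
      have h1 : μ (Xi ⁻¹' A ∩ (fun ω => J (X ω) (Y ω)) ⁻¹' D)
          = (μ.map (fun ω => (X ω, Y ω))) S := by
        rw [Measure.map_apply (hX.prodMk hY) hSm]
        rfl
      have h2 : (μ.map (fun ω => (X ω, Y ω))) S = ((μ.map X).prod μY) S := by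
        rw [(indepFun_iff_map_prod_eq_prod_map_map hX.aemeasurable hY.aemeasurable).mp hindep]
      have h3 : ((μ.map X).prod μY) S = ∫⁻ y, (μ.map X) ((fun x => (x, y)) ⁻¹' S) ∂μY :=
        Measure.prod_apply_symm hSm
      have h4 : ∀ y, (μ.map X) ((fun x => (x, y)) ⁻¹' S) = μ (Xi ⁻¹' A ∩ X ⁻¹' (Dsec y)) := by
        intro y
        have : ((fun x => (x, y)) ⁻¹' S) = ((fun x : Fin m → ℝ => x i) ⁻¹' A) ∩ Dsec y := rfl
        rw [this, Measure.map_apply hX ((((measurable_pi_apply i)) hA).inter (hDsecm y))]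
        rfl
      rw [h1, h2, h3]
      exact lintegral_congr fun y => (h4 y).symm
    rw [hRHS, hLHS, hLHS2, hswap, lintegral_congr hinner, hkey]
  have htrans : (fun ω => φ (Xi ω)) =ᵐ[μ] (fun ω => Φ (Xi ω)) :=
    ae_of_ae_map hXi.aemeasurable hφae
  exact hgoal.symm.trans htrans.symm


/-- Concatenation of two independent PRDS vectors is PRDS on the union of the
(shifted) index sets. -/
theorem prds_concat_of_indep
    {Ω : Type*} [MeasurableSpace Ω] (μ : Measure Ω) [IsProbabilityMeasure μ]
    (m₁ m₂ : ℕ) (X : Ω → Fin m₁ → ℝ) (Y : Ω → Fin m₂ → ℝ)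
    (hX : Measurable X) (hY : Measurable Y)
    (hindep : IndepFun X Y μ)
    (IX : Set (Fin m₁)) (IY : Set (Fin m₂))
    (hXprds : PRDS μ X IX) (hYprds : PRDS μ Y IY) :
    PRDS μ (fun ω => Fin.append (X ω) (Y ω))
      ((Fin.castAdd m₂ '' IX) ∪ (Fin.natAdd m₁ '' IY)) := by
  have hApp : ∀ (a b : ℕ), Measurable (fun p : (Fin a → ℝ) × (Fin b → ℝ) =>
      Fin.append p.1 p.2) := by
    intro a b
    rw [measurable_pi_iff]
    intro j
    refine Fin.addCases (motive := fun j => Measurable fun p : (Fin a → ℝ) × (Fin b → ℝ) =>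
      Fin.append p.1 p.2 j) (fun i => ?_) (fun i => ?_) j
    · simp only [Fin.append_left]
      exact (measurable_pi_apply i).comp measurable_fst
    · simp only [Fin.append_right]
      exact (measurable_pi_apply i).comp measurable_snd
  intro D hD hDinc i hi
  rcases hi with ⟨i₀, hi₀, rfl⟩ | ⟨i₁, hi₁, rfl⟩
  · simp only [Fin.append_left]
    refine aux_prds μ X Y hX hY hindep hXprds (fun x y => Fin.append x y)
      (hApp m₁ m₂) ?_ D hD hDinc hi₀
    intro y a b hab
    intro j
    refine Fin.addCases (motive := fun j => Fin.append a y j ≤ Fin.append b y j)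
      (fun i => ?_) (fun i => ?_) j
    · simp only [Fin.append_left]
      exact hab i
    · simp only [Fin.append_right]
      exact le_refl _
  · simp only [Fin.append_right]
    refine aux_prds μ Y X hY hX hindep.symm hYprds (fun y x => Fin.append x y)
      ((hApp m₁ m₂).comp measurable_swap) ?_ D hD hDinc hi₁
    intro x a b hab
    intro j
    refine Fin.addCases (motive := fun j => Fin.append x a j ≤ Fin.append x b j)
      (fun i => ?_) (fun i => ?_) j
    · simp only [Fin.append_left]
      exact le_refl _
    · simp only [Fin.append_right]
      exact hab i
end

section
/- Let U⁽¹⁾ be a sequence of random variables that is exchangeable conditionally on V⁽¹⁾, and let (U⁽²⁾, V⁽²⁾) be independent of (U⁽¹⁾, V⁽¹⁾). Let g₁, g₂ be measurable score functions where g₂'s parameters depend only on (U⁽²⁾, V⁽²⁾) and g₁'s parameters are a permutation-invariant function of (U⁽¹⁾, V⁽¹⁾) (invariant under permutations of U⁽¹⁾ fixing a designated training prefix). Then the composite scores S_i = max{g₁(U⁽¹⁾_i), g₂(U⁽¹⁾_i)} are exchangeable conditionally on the composite scores of V⁽¹⁾, under permutations fixing the training prefix indices. -/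
open MeasureTheory ProbabilityTheory

/-- Conditional exchangeability of composite scores (two agents).
Agent 1's nulls `U¹` are exchangeable conditionally on its novelties `V¹` under
permutations fixing the training prefix of length `k`; Agent 2's data `W` is
independent of `(U¹, V¹)`; Agent 1's model parameters `h₁(U¹,V¹)` are invariant
under such permutations and Agent 2's parameters depend only on `W`. Then the
composite max-scores of the nulls are exchangeable conditionally on the composite
scores of the novelties. -/
theorem composite_scores_cond_exchangeable
    {Ω 𝒵 𝒲 Θ₁ Θ₂ : Type*} [MeasurableSpace Ω] [MeasurableSpace 𝒵]
    [MeasurableSpace 𝒲] [MeasurableSpace Θ₁] [MeasurableSpace Θ₂]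
    (μ : Measure Ω) [IsProbabilityMeasure μ]
    (N M k : ℕ)
    (U1 : Fin N → Ω → 𝒵) (V1 : Fin M → Ω → 𝒵) (W : Ω → 𝒲)
    (hU1 : ∀ i, Measurable (U1 i)) (hV1 : ∀ j, Measurable (V1 j))
    (hW : Measurable W)
    (hexch : ∀ π : Equiv.Perm (Fin N), (∀ i : Fin N, (i : ℕ) < k → π i = i) →
      Measure.map (fun ω => ((fun i => U1 (π i) ω), (fun j => V1 j ω))) μ
        = Measure.map (fun ω => ((fun i => U1 i ω), (fun j => V1 j ω))) μ)
    (hindep : IndepFun (fun ω => ((fun i => U1 i ω), (fun j => V1 j ω))) W μ)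
    (h₁ : (Fin N → 𝒵) × (Fin M → 𝒵) → Θ₁) (hh₁ : Measurable h₁)
    (hinv : ∀ π : Equiv.Perm (Fin N), (∀ i : Fin N, (i : ℕ) < k → π i = i) →
      ∀ (u : Fin N → 𝒵) (v : Fin M → 𝒵), h₁ (fun i => u (π i), v) = h₁ (u, v))
    (h₂ : 𝒲 → Θ₂) (hh₂ : Measurable h₂)
    (g₁ : 𝒵 × Θ₁ → ℝ) (hg₁ : Measurable g₁)
    (g₂ : 𝒵 × Θ₂ → ℝ) (hg₂ : Measurable g₂) :
    ∀ π : Equiv.Perm (Fin N), (∀ i : Fin N, (i : ℕ) < k → π i = i) →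
      Measure.map (fun ω =>
          ((fun i => max (g₁ (U1 (π i) ω, h₁ ((fun i' => U1 i' ω), fun j => V1 j ω)))
                         (g₂ (U1 (π i) ω, h₂ (W ω)))),
           (fun j => max (g₁ (V1 j ω, h₁ ((fun i' => U1 i' ω), fun j' => V1 j' ω)))
                         (g₂ (V1 j ω, h₂ (W ω)))))) μ
        = Measure.map (fun ω =>
          ((fun i => max (g₁ (U1 i ω, h₁ ((fun i' => U1 i' ω), fun j => V1 j ω)))
                         (g₂ (U1 i ω, h₂ (W ω)))),
           (fun j => max (g₁ (V1 j ω, h₁ ((fun i' => U1 i' ω), fun j' => V1 j' ω)))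
                         (g₂ (V1 j ω, h₂ (W ω)))))) μ := by
  intro π hπ
  classical
  -- abbreviations
  set X : Ω → (Fin N → 𝒵) × (Fin M → 𝒵) := fun ω => ((fun i => U1 i ω), (fun j => V1 j ω)) with hX
  set Xπ : Ω → (Fin N → 𝒵) × (Fin M → 𝒵) := fun ω => ((fun i => U1 (π i) ω), (fun j => V1 j ω)) with hXπ
  have hXm : Measurable X :=
    (measurable_pi_lambda _ fun i => hU1 i).prodMk (measurable_pi_lambda _ fun j => hV1 j)
  have hXπm : Measurable Xπ :=
    (measurable_pi_lambda _ fun i => hU1 (π i)).prodMk (measurable_pi_lambda _ fun j => hV1 j)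
  -- the permutation map φ on the product space
  set φ : (Fin N → 𝒵) × (Fin M → 𝒵) → (Fin N → 𝒵) × (Fin M → 𝒵) :=
    fun p => ((fun i => p.1 (π i)), p.2) with hφ
  have hφm : Measurable φ := by
    refine Measurable.prod ?_ measurable_snd
    exact measurable_pi_lambda _ (fun i => (measurable_pi_apply (π i)).comp measurable_fst)
  have hXπeq : Xπ = φ ∘ X := rfl
  -- independence of Xπ and W
  have hindepπ : IndepFun Xπ W μ := by
    rw [hXπeq]
    exact hindep.comp hφm measurable_id
  -- joint laws agree
  have hjoint : Measure.map (fun ω => (Xπ ω, W ω)) μ = Measure.map (fun ω => (X ω, W ω)) μ := by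
    rw [(indepFun_iff_map_prod_eq_prod_map_map hXπm.aemeasurable hW.aemeasurable).mp hindepπ,
        (indepFun_iff_map_prod_eq_prod_map_map hXm.aemeasurable hW.aemeasurable).mp hindep,
        hexch π hπ]
  -- the score function F
  set F : ((Fin N → 𝒵) × (Fin M → 𝒵)) × 𝒲 → (Fin N → ℝ) × (Fin M → ℝ) :=
    fun p => ((fun i => max (g₁ (p.1.1 i, h₁ p.1)) (g₂ (p.1.1 i, h₂ p.2))),
              (fun j => max (g₁ (p.1.2 j, h₁ p.1)) (g₂ (p.1.2 j, h₂ p.2)))) with hF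
  have hFm : Measurable F := by
    have m1 : Measurable fun p : ((Fin N → 𝒵) × (Fin M → 𝒵)) × 𝒲 => p.1 := measurable_fst
    refine Measurable.prod (measurable_pi_lambda _ fun a => Measurable.max ?_ ?_)
      (measurable_pi_lambda _ fun a => Measurable.max ?_ ?_)
    · exact hg₁.comp (((measurable_pi_apply a).comp (measurable_fst.comp m1)).prodMk
        (hh₁.comp m1))
    · exact hg₂.comp (((measurable_pi_apply a).comp (measurable_fst.comp m1)).prodMk
        (hh₂.comp measurable_snd))
    · exact hg₁.comp (((measurable_pi_apply a).comp (measurable_snd.comp m1)).prodMk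
        (hh₁.comp m1))
    · exact hg₂.comp (((measurable_pi_apply a).comp (measurable_snd.comp m1)).prodMk
        (hh₂.comp measurable_snd))
  have key1 : (fun ω =>
          ((fun i => max (g₁ (U1 (π i) ω, h₁ ((fun i' => U1 i' ω), fun j => V1 j ω)))
                         (g₂ (U1 (π i) ω, h₂ (W ω)))),
           (fun j => max (g₁ (V1 j ω, h₁ ((fun i' => U1 i' ω), fun j' => V1 j' ω)))
                         (g₂ (V1 j ω, h₂ (W ω)))))) = F ∘ (fun ω => (Xπ ω, W ω)) := by
    funext ω
    simp only [hF, Function.comp, hXπ]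
    rw [show h₁ (fun i => U1 (π i) ω, fun j => V1 j ω) = h₁ (fun i => U1 i ω, fun j => V1 j ω)
      from hinv π hπ (fun i => U1 i ω) (fun j => V1 j ω)]
  have key2 : (fun ω =>
          ((fun i => max (g₁ (U1 i ω, h₁ ((fun i' => U1 i' ω), fun j => V1 j ω)))
                         (g₂ (U1 i ω, h₂ (W ω)))),
           (fun j => max (g₁ (V1 j ω, h₁ ((fun i' => U1 i' ω), fun j' => V1 j' ω)))
                         (g₂ (V1 j ω, h₂ (W ω)))))) = F ∘ (fun ω => (X ω, W ω)) := rfl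
  rw [key1, key2, ← Measure.map_map hFm (hXπm.prodMk hW), ← Measure.map_map hFm (hXm.prodMk hW), hjoint]
end

section
/- Let X⁽¹⁾, …, X⁽ᴷ⁾ be mutually independent random vectors, each X⁽ʲ⁾ ∈ ℝ^{m_j} being PRDS on an index set I_j. Then the concatenated vector X = (X⁽¹⁾,…,X⁽ᴷ⁾) ∈ ℝ^{m_1+⋯+m_K} is PRDS on the union of the (appropriately shifted) index sets ⋃_j I_j. -/
open MeasureTheory ProbabilityTheory Filter

lemma count_lemma (n : ℕ) (v : ℝ) (h0 : 0 ≤ v) (h1 : v ≤ 1) :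
    v - 1/(n+1) ≤ ((n:ℝ)+1)⁻¹ * ∑ k ∈ Finset.range (n+1),
      (if ((k:ℝ)+1)/((n:ℝ)+1) < v then (1:ℝ) else 0) ∧
    ((n:ℝ)+1)⁻¹ * ∑ k ∈ Finset.range (n+1),
      (if ((k:ℝ)+1)/((n:ℝ)+1) < v then (1:ℝ) else 0) ≤ v := by
  have hn : (0:ℝ) < (n:ℝ)+1 := by positivity
  set N := n + 1 with hN
  have hcast : ((n:ℝ)+1) = (N:ℝ) := by push_cast [hN]; ring
  have hNpos : (0:ℝ) < (N:ℝ) := by rw [← hcast]; positivity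
  set M := ⌈(N:ℝ) * v⌉₊ - 1 with hM
  have hcond : ∀ k : ℕ, (((k:ℝ)+1)/((n:ℝ)+1) < v ↔ k < M) := by
    intro k
    rw [div_lt_iff₀ hn, hcast]
    constructor
    · intro h
      have h2 : k+1 < ⌈(N:ℝ)*v⌉₊ := Nat.lt_ceil.mpr (by push_cast; nlinarith)
      omega
    · intro h
      have h2 : k+1 < ⌈(N:ℝ)*v⌉₊ := by omega
      have := Nat.lt_ceil.mp h2
      push_cast at this
      nlinarith [Nat.ceil_lt_add_one (show (0:ℝ) ≤ (N:ℝ)*v by positivity)]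
  have hsum : ∑ k ∈ Finset.range N, (if ((k:ℝ)+1)/((n:ℝ)+1) < v then (1:ℝ) else 0)
      = ((min N M : ℕ) : ℝ) := by
    have h1' : ∀ k ∈ Finset.range N, (if ((k:ℝ)+1)/((n:ℝ)+1) < v then (1:ℝ) else 0)
        = (if k < M then (1:ℝ) else 0) := by
      intro k _; simp [hcond k]
    rw [Finset.sum_congr rfl h1', Finset.sum_boole]
    have : Finset.filter (fun k => k < M) (Finset.range N) = Finset.range (min N M) := by
      ext k; simp [Finset.mem_range]
    simp [this]
  rw [hsum]
  have hceil_le : ((N:ℝ) * v) ≤ ⌈(N:ℝ)*v⌉₊ := Nat.le_ceil _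
  have hceil_lt : (⌈(N:ℝ)*v⌉₊ : ℝ) < (N:ℝ)*v + 1 := Nat.ceil_lt_add_one (by positivity)
  have hMle : ((min N M : ℕ):ℝ) ≤ (N:ℝ) * v := by
    rcases Nat.eq_zero_or_pos ⌈(N:ℝ)*v⌉₊ with h | h
    · have hz : min N M = 0 := by omega
      rw [hz]; simp; positivity
    · have hle : ((min N M : ℕ):ℝ) ≤ (M:ℝ) := by exact_mod_cast Nat.cast_le.mpr (min_le_right _ _)
      have hMr : (M:ℝ) = (⌈(N:ℝ)*v⌉₊ : ℝ) - 1 := by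
        rw [hM, Nat.cast_sub h]; simp
      linarith
  have hMge : (N:ℝ) * v - 1 ≤ ((min N M : ℕ):ℝ) := by
    rcases le_or_gt (N:ℕ) M with h | h
    · rw [min_eq_left h]
      nlinarith
    · rw [min_eq_right h.le]
      rcases Nat.eq_zero_or_pos ⌈(N:ℝ)*v⌉₊ with h0' | h0'
      · have hv : (N:ℝ)*v ≤ 0 := by
          by_contra hc
          push_neg at hc
          have := Nat.ceil_pos.mpr hc
          omega
        have hz : (M:ℝ) = 0 := by simp [hM, h0']
        linarith
      · have hMr : (M:ℝ) = (⌈(N:ℝ)*v⌉₊ : ℝ) - 1 := by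
          rw [hM, Nat.cast_sub h0']; simp
        linarith
  have hinv : ((N:ℝ))⁻¹ * (N:ℝ) = 1 := inv_mul_cancel₀ (ne_of_gt hNpos)
  have hinvpos : (0:ℝ) ≤ ((N:ℝ))⁻¹ := by positivity
  constructor
  · rw [hcast]
    have := mul_le_mul_of_nonneg_left hMge hinvpos
    have hd : 1/(N:ℝ) = ((N:ℝ))⁻¹ := one_div _
    nlinarith
  · rw [hcast]
    have := mul_le_mul_of_nonneg_left hMle hinvpos
    nlinarith

lemma exists_monotone_rep {Ω : Type*} [inst : MeasurableSpace Ω] (μ : Measure Ω)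
    [IsProbabilityMeasure μ]
    {α : Type*} [MeasurableSpace α] [Preorder α]
    {Y : Ω → α} (hY : Measurable Y) {ξ : Ω → ℝ}
    {m' : MeasurableSpace Ω} (hm' : m' ≤ inst)
    (hPR : ∀ D : Set α, MeasurableSet D → (∀ a b, a ∈ D → a ≤ b → b ∈ D) →
      ∃ φ : ℝ → ℝ, Monotone φ ∧
        (μ[fun ω => D.indicator (fun _ => (1:ℝ)) (Y ω) | m'] =ᵐ[μ] fun ω => φ (ξ ω)))
    {g : α → ℝ} (hg : Measurable g) (hgm : Monotone g)
    (hg0 : ∀ y, 0 ≤ g y) (hg1 : ∀ y, g y ≤ 1) :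
    ∃ φ : ℝ → ℝ, Monotone φ ∧ μ[fun ω => g (Y ω) | m'] =ᵐ[μ] fun ω => φ (ξ ω) := by
  classical
  set D : ℕ → ℕ → Set α := fun n k => {y | ((k:ℝ)+1)/((n:ℝ)+1) < g y} with hD
  have hDmeas : ∀ n k, MeasurableSet (D n k) := fun n k =>
    measurableSet_lt measurable_const hg
  have hDinc : ∀ n k, ∀ a b, a ∈ D n k → a ≤ b → b ∈ D n k := fun n k a b ha hab =>
    lt_of_lt_of_le ha (hgm hab)
  choose φ hφmono hφae using fun n k => hPR (D n k) (hDmeas n k) (hDinc n k)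
  set f : ℕ → ℕ → Ω → ℝ := fun n k ω => (D n k).indicator (fun _ => (1:ℝ)) (Y ω) with hf
  have hf_int : ∀ n k, Integrable (f n k) μ := by
    intro n k
    refine ⟨((measurable_const.indicator (hDmeas n k)).comp hY).aestronglyMeasurable, ?_⟩
    refine HasFiniteIntegral.of_bounded (C := 1) (ae_of_all _ fun ω => ?_)
    simp only [hf, Function.comp, Set.indicator_apply]
    split <;> simp
  have hf_eq : ∀ n k ω, f n k ω = if ((k:ℝ)+1)/((n:ℝ)+1) < g (Y ω) then 1 else 0 := by
    intro n k ω; simp [hf, Set.indicator_apply, hD, Set.mem_setOf_eq]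
  set G : ℕ → Ω → ℝ := fun n ω => ((n:ℝ)+1)⁻¹ * ∑ k ∈ Finset.range (n+1), f n k ω with hG
  have hG_int : ∀ n, Integrable (G n) μ := by
    intro n
    have h : G n = fun ω => ((n:ℝ)+1)⁻¹ * (∑ k ∈ Finset.range (n+1), f n k) ω := by
      funext ω; simp [hG, Finset.sum_apply]
    rw [h]
    exact (integrable_finset_sum' _ (fun k _ => hf_int n k)).const_mul _
  have hgY_int : Integrable (fun ω => g (Y ω)) μ := by
    refine ⟨(hg.comp hY).aestronglyMeasurable, ?_⟩
    refine HasFiniteIntegral.of_bounded (C := 1) (ae_of_all _ fun ω => ?_)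
    rw [Real.norm_eq_abs, abs_le]
    exact ⟨by linarith [hg0 (Y ω)], hg1 _⟩
  -- conditional expectation of G n
  set ψ : ℕ → ℝ → ℝ := fun n x => ((n:ℝ)+1)⁻¹ * ∑ k ∈ Finset.range (n+1), φ n k x with hψ
  have hGcond : ∀ n, μ[G n|m'] =ᵐ[μ] fun ω => ψ n (ξ ω) := by
    intro n
    have h1 : G n = ((n:ℝ)+1)⁻¹ • (∑ k ∈ Finset.range (n+1), f n k) := by
      funext ω; simp [hG, Finset.sum_apply, smul_eq_mul]
    rw [h1]
    refine (condExp_smul (m := m') _ _).trans ?_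
    have h2 := condExp_finsetSum (μ := μ) (m := m') (s := Finset.range (n+1)) (f := f n)
      (fun k _ => hf_int n k)
    have h3 : ∀ᵐ ω ∂μ, ∀ k, (μ[f n k|m']) ω = φ n k (ξ ω) := ae_all_iff.mpr fun k => hφae n k
    filter_upwards [h2, h3] with ω hω2 hω3
    simp only [Pi.smul_apply, smul_eq_mul, hψ]
    rw [hω2, Finset.sum_apply, Finset.sum_congr rfl (fun k _ => hω3 k)]
  -- pointwise bounds
  have hbound : ∀ (n : ℕ) (ω : Ω), g (Y ω) - 1/((n:ℝ)+1) ≤ G n ω ∧ G n ω ≤ g (Y ω) := by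
    intro n ω
    have h := count_lemma n (g (Y ω)) (hg0 _) (hg1 _)
    have hs : G n ω = ((n:ℝ)+1)⁻¹ * ∑ k ∈ Finset.range (n+1),
        (if ((k:ℝ)+1)/((n:ℝ)+1) < g (Y ω) then (1:ℝ) else 0) := by
      simp only [hG]
      rw [Finset.sum_congr rfl (fun k _ => hf_eq n k ω)]
    rw [hs]
    exact ⟨h.1, h.2⟩
  have hG01 : ∀ n ω, 0 ≤ G n ω ∧ G n ω ≤ 1 := by
    intro n ω
    constructor
    · apply mul_nonneg (by positivity)
      exact Finset.sum_nonneg fun k _ => by rw [hf_eq]; positivity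
    · have hsum_le : ∑ k ∈ Finset.range (n+1), f n k ω ≤ (n+1 : ℝ) := by
        calc ∑ k ∈ Finset.range (n+1), f n k ω ≤ ∑ k ∈ Finset.range (n+1), (1:ℝ) :=
              Finset.sum_le_sum fun k _ => by rw [hf_eq]; split <;> norm_num
          _ = (n+1 : ℝ) := by simp
      have hpos : (0:ℝ) < (n:ℝ)+1 := by positivity
      calc ((n:ℝ)+1)⁻¹ * ∑ k ∈ Finset.range (n+1), f n k ω
          ≤ ((n:ℝ)+1)⁻¹ * ((n:ℝ)+1) := by
            apply mul_le_mul_of_nonneg_left _ (by positivity)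
            exact_mod_cast hsum_le
        _ = 1 := inv_mul_cancel₀ (ne_of_gt hpos)
  -- conditional expectation bounds
  have hcond_le : ∀ n, (μ[G n|m']) ≤ᵐ[μ] (μ[fun ω => g (Y ω)|m']) := fun n =>
    condExp_mono (hG_int n) hgY_int (ae_of_all _ fun ω => (hbound n ω).2)
  have hcond_ge : ∀ n, (μ[fun ω => g (Y ω)|m']) ≤ᵐ[μ]
      fun ω => (μ[G n|m']) ω + 1/((n:ℝ)+1) := by
    intro n
    have h1 : (μ[fun ω => g (Y ω)|m']) ≤ᵐ[μ] μ[fun ω => G n ω + 1/((n:ℝ)+1)|m'] :=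
      condExp_mono hgY_int ((hG_int n).add (integrable_const _))
        (ae_of_all _ fun ω => by linarith [(hbound n ω).1])
    have h2 : μ[fun ω => G n ω + 1/((n:ℝ)+1)|m'] =ᵐ[μ]
        (μ[G n|m']) + μ[fun _ => 1/((n:ℝ)+1)|m'] := condExp_add (hG_int n) (integrable_const _) m'
    have h3 : μ[fun _ : Ω => 1/((n:ℝ)+1)|m'] = fun _ => 1/((n:ℝ)+1) := condExp_const hm' _
    filter_upwards [h1, h2] with ω hω1 hω2
    rw [hω2, Pi.add_apply, h3] at hω1
    exact hω1
  have hcond0 : ∀ n, (0:Ω → ℝ) ≤ᵐ[μ] μ[G n|m'] := fun n =>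
    condExp_nonneg (ae_of_all _ fun ω => (hG01 n ω).1)
  have hcond1 : ∀ n, (μ[G n|m']) ≤ᵐ[μ] fun _ => (1:ℝ) := by
    intro n
    have := condExp_mono (μ := μ) (m := m') (hG_int n) (integrable_const (1:ℝ))
      (ae_of_all _ fun ω => (hG01 n ω).2)
    rwa [condExp_const hm'] at this
  -- truncated monotone representatives
  set Φ : ℕ → ℝ → ℝ := fun n x => min 1 (max 0 (ψ n x)) with hΦ
  have hψmono : ∀ n, Monotone (ψ n) := by
    intro n a b hab
    exact mul_le_mul_of_nonneg_left
      (Finset.sum_le_sum fun k _ => hφmono n k hab) (by positivity)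
  have hΦmono : ∀ n, Monotone (Φ n) := fun n a b hab =>
    min_le_min le_rfl (max_le_max le_rfl (hψmono n hab))
  have hΦ01 : ∀ n x, 0 ≤ Φ n x ∧ Φ n x ≤ 1 := fun n x =>
    ⟨le_min zero_le_one (le_max_left _ _), min_le_left _ _⟩
  have hΦeq : ∀ n, ∀ᵐ ω ∂μ, Φ n (ξ ω) = (μ[G n|m']) ω := by
    intro n
    filter_upwards [hGcond n, hcond0 n, hcond1 n] with ω h1 h2 h3
    simp only [Pi.zero_apply] at h2
    rw [hΦ]
    simp only [← h1]
    rw [max_eq_right h2, min_eq_right h3]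
  -- combine everything a.e.
  refine ⟨fun x => limsup (fun n => Φ n x) atTop, ?_, ?_⟩
  · intro a b hab
    refine limsup_le_limsup (Eventually.of_forall fun n => hΦmono n hab) ?_ ?_
    · exact (isBoundedUnder_of ⟨0, fun n => (hΦ01 n a).1⟩ :
        IsBoundedUnder (· ≥ ·) atTop _).isCoboundedUnder_le
    · exact isBoundedUnder_of ⟨1, fun n => (hΦ01 n b).2⟩
  · have hAll : ∀ᵐ ω ∂μ, ∀ n, Φ n (ξ ω) = (μ[G n|m']) ω ∧
        (μ[G n|m']) ω ≤ (μ[fun ω => g (Y ω)|m']) ω ∧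
        (μ[fun ω => g (Y ω)|m']) ω ≤ (μ[G n|m']) ω + 1/((n:ℝ)+1) := by
      rw [ae_all_iff]
      intro n
      filter_upwards [hΦeq n, hcond_le n, hcond_ge n] with ω h1 h2 h3
      exact ⟨h1, h2, h3⟩
    filter_upwards [hAll] with ω hω
    set L := (μ[fun ω => g (Y ω)|m']) ω with hL
    have hT : Tendsto (fun n => Φ n (ξ ω)) atTop (nhds L) := by
      rw [← tendsto_sub_nhds_zero_iff]
      refine squeeze_zero_norm (fun n => ?_) tendsto_one_div_add_atTop_nhds_zero_nat
      obtain ⟨h1, h2, h3⟩ := hω n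
      rw [h1, Real.norm_eq_abs, abs_le]
      have hpos : (0:ℝ) ≤ 1/((n:ℝ)+1) := by positivity
      constructor <;> linarith
    exact hT.limsup_eq.symm

/-- The concatenation of `K` mutually independent PRDS random vectors is PRDS on the
union of their (appropriately embedded) index sets. -/
theorem prds_concat_of_iIndep
    {Ω : Type*} [MeasurableSpace Ω] (μ : Measure Ω) [IsProbabilityMeasure μ]
    (K : ℕ) (m : Fin K → ℕ) (X : (j : Fin K) → Ω → Fin (m j) → ℝ)
    (hmeas : ∀ j, Measurable (X j))
    (hindep : iIndepFun X μ)
    (I : (j : Fin K) → Set (Fin (m j)))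
    (hprds : ∀ j, PRDS μ (X j) (I j)) :
    PRDS μ (fun ω (p : Σ j, Fin (m j)) => X p.1 ω p.2)
      {p : Σ j, Fin (m j) | p.2 ∈ I p.1} := by
  classical
  intro D hD hDinc i hi
  obtain ⟨j₀, i₀⟩ := i
  simp only [Set.mem_setOf_eq] at hi
  set Y : Ω → Fin (m j₀) → ℝ := X j₀ with hYdef
  have hYmeas : Measurable Y := hmeas j₀
  set Z : Ω → ((j : {j : Fin K // j ≠ j₀}) → (Fin (m j.1) → ℝ)) := fun ω j => X j.1 ω
    with hZdef
  have hZmeas : Measurable Z := measurable_pi_lambda _ (fun j => hmeas j.1)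
  set combine : (Fin (m j₀) → ℝ) → ((j : {j : Fin K // j ≠ j₀}) → (Fin (m j.1) → ℝ)) →
      ((p : Σ j, Fin (m j)) → ℝ) :=
    fun y z p => if h : p.1 = j₀ then y (Fin.cast (congrArg m h) p.2) else z ⟨p.1, h⟩ p.2
    with hcombdef
  have hcomb_meas : Measurable (fun q : (Fin (m j₀) → ℝ) ×
      ((j : {j : Fin K // j ≠ j₀}) → (Fin (m j.1) → ℝ)) => combine q.1 q.2) := by
    apply measurable_pi_lambda
    intro p
    rcases eq_or_ne p.1 j₀ with h | h
    · simp only [hcombdef, dif_pos h]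
      exact measurable_fst.eval
    · simp only [hcombdef, dif_neg h]
      exact measurable_snd.eval.eval
  have hXfull : ∀ ω, (fun p : (Σ j, Fin (m j)) => X p.1 ω p.2) = combine (Y ω) (Z ω) := by
    intro ω
    funext p
    obtain ⟨j, i⟩ := p
    simp only [hcombdef]
    by_cases h : j = j₀
    · subst h
      rw [dif_pos rfl]
      rfl
    · rw [dif_neg h]
  -- independence of Y and Z
  have hsplit := hindep.indepFun_finset {j₀} {j₀}ᶜ (by simp) hmeas
  have hYZindep : IndepFun Y Z μ := by
    have h1 : Y = (fun w : (i : ({j₀} : Finset (Fin K))) → (Fin (m i) → ℝ) =>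
        w ⟨j₀, by simp⟩) ∘ (fun a (i : ({j₀} : Finset (Fin K))) => X i a) := rfl
    have h2 : Z = (fun w : (i : (({j₀}ᶜ : Finset (Fin K)))) → (Fin (m i) → ℝ) =>
        fun j : {j : Fin K // j ≠ j₀} => w ⟨j.1, by simp [j.2]⟩) ∘
        (fun a (i : (({j₀}ᶜ : Finset (Fin K)))) => X i a) := rfl
    rw [h1, h2]
    exact hsplit.comp (measurable_pi_apply _)
      (measurable_pi_lambda _ fun j => measurable_pi_apply _)
  have hlaw : μ.map (fun ω => (Y ω, Z ω)) = (μ.map Y).prod (μ.map Z) :=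
    (indepFun_iff_map_prod_eq_prod_map_map hYmeas.aemeasurable hZmeas.aemeasurable).mp hYZindep
  haveI hPZ : IsProbabilityMeasure (μ.map Z) := Measure.isProbabilityMeasure_map hZmeas.aemeasurable
  haveI hPY : IsProbabilityMeasure (μ.map Y) := Measure.isProbabilityMeasure_map hYmeas.aemeasurable
  -- the function g
  set gfun : (Fin (m j₀) → ℝ) → ℝ :=
    fun y => ∫ z, D.indicator (fun _ => (1:ℝ)) (combine y z) ∂(μ.map Z) with hgdef
  have hind_meas : Measurable (fun q : (Fin (m j₀) → ℝ) ×
      ((j : {j : Fin K // j ≠ j₀}) → (Fin (m j.1) → ℝ)) =>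
      D.indicator (fun _ => (1:ℝ)) (combine q.1 q.2)) :=
    (measurable_const.indicator hD).comp hcomb_meas
  have hind_int : ∀ y, Integrable (fun z => D.indicator (fun _ => (1:ℝ)) (combine y z))
      (μ.map Z) := by
    intro y
    refine ⟨(hind_meas.comp measurable_prodMk_left).aestronglyMeasurable, ?_⟩
    refine HasFiniteIntegral.of_bounded (C := 1) (ae_of_all _ fun z => ?_)
    rw [Set.indicator_apply]
    split <;> simp
  have hg_meas : Measurable gfun :=
    (hind_meas.stronglyMeasurable.integral_prod_right').measurable
  have hg0 : ∀ y, 0 ≤ gfun y := fun y =>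
    integral_nonneg fun z => Set.indicator_apply_nonneg (fun _ => zero_le_one)
  have hg1 : ∀ y, gfun y ≤ 1 := by
    intro y
    have h := integral_mono (hind_int y) (integrable_const (1:ℝ)) (fun z => by
      show D.indicator (fun _ => (1:ℝ)) (combine y z) ≤ 1
      rw [Set.indicator_apply]; split <;> simp)
    simpa using h
  have hgmono : Monotone gfun := by
    intro y y' hle
    apply integral_mono (hind_int y) (hind_int y')
    intro z
    have hcle : combine y z ≤ combine y' z := by
      intro p
      simp only [hcombdef]
      by_cases h : p.1 = j₀
      · rw [dif_pos h, dif_pos h]; exact hle _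
      · rw [dif_neg h, dif_neg h]
    show D.indicator (fun _ => (1:ℝ)) (combine y z) ≤ D.indicator (fun _ => (1:ℝ)) (combine y' z)
    rw [Set.indicator_apply, Set.indicator_apply]
    by_cases hmem : combine y z ∈ D
    · rw [if_pos hmem, if_pos (hDinc _ _ hmem hcle)]
    · rw [if_neg hmem]; split <;> norm_num
  -- conditioning σ-algebra
  set ξ : Ω → ℝ := fun ω => X j₀ ω i₀ with hξdef
  have hξmeas : Measurable ξ := (measurable_pi_apply i₀).comp hYmeas
  have hm' : MeasurableSpace.comap ξ inferInstance ≤ ‹MeasurableSpace Ω› := hξmeas.comap_le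
  haveI hsf : SigmaFinite (μ.trim hm') := inferInstance
  -- integrability of the full indicator
  have hfull_meas : Measurable (fun ω => D.indicator (fun _ => (1:ℝ)) (combine (Y ω) (Z ω))) :=
    hind_meas.comp (hYmeas.prodMk hZmeas)
  have hfull_int : Integrable (fun ω => D.indicator (fun _ => (1:ℝ)) (combine (Y ω) (Z ω))) μ := by
    refine ⟨hfull_meas.aestronglyMeasurable, ?_⟩
    refine HasFiniteIntegral.of_bounded (C := 1) (ae_of_all _ fun ω => ?_)
    rw [Set.indicator_apply]
    split <;> simp
  have hgY_int : Integrable (fun ω => gfun (Y ω)) μ := by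
    refine ⟨(hg_meas.comp hYmeas).aestronglyMeasurable, ?_⟩
    refine HasFiniteIntegral.of_bounded (C := 1) (ae_of_all _ fun ω => ?_)
    rw [Real.norm_eq_abs, abs_le]
    exact ⟨by linarith [hg0 (Y ω)], hg1 _⟩
  -- key identity
  have hkey : μ[fun ω => gfun (Y ω)|MeasurableSpace.comap ξ inferInstance] =ᵐ[μ]
      μ[fun ω => D.indicator (fun _ => (1:ℝ)) (combine (Y ω) (Z ω))|MeasurableSpace.comap ξ inferInstance] := by
    have hcondint : Integrable (μ[fun ω => gfun (Y ω)|MeasurableSpace.comap ξ inferInstance]) μ := integrable_condExp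
    refine ae_eq_condExp_of_forall_setIntegral_eq hm' hfull_int
      (fun s _ _ => hcondint.integrableOn) ?_
      ((stronglyMeasurable_condExp (m := MeasurableSpace.comap ξ inferInstance)).aestronglyMeasurable)
    intro s hs hμs
    rw [setIntegral_condExp hm' hgY_int hs]
    obtain ⟨B, hB, rfl⟩ := MeasurableSpace.measurableSet_comap.mp hs
    -- the product function
    set F : (Fin (m j₀) → ℝ) × ((j : {j : Fin K // j ≠ j₀}) → (Fin (m j.1) → ℝ)) → ℝ :=
      fun q => B.indicator (fun _ => (1:ℝ)) (q.1 i₀) * D.indicator (fun _ => (1:ℝ))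
        (combine q.1 q.2) with hFdef
    have hF_meas : Measurable F :=
      ((measurable_const.indicator hB).comp ((measurable_pi_apply i₀).comp measurable_fst)).mul
        hind_meas
    have hF_int : Integrable F ((μ.map Y).prod (μ.map Z)) := by
      refine ⟨hF_meas.aestronglyMeasurable, ?_⟩
      refine HasFiniteIntegral.of_bounded (C := 1) (ae_of_all _ fun q => ?_)
      simp only [hFdef, Set.indicator_apply]
      split <;> split <;> simp
    have hs_meas : MeasurableSet ((fun ω => X j₀ ω i₀) ⁻¹' B) := hξmeas hB
    have e1 : ∫ ω in ((fun ω => X j₀ ω i₀) ⁻¹' B),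
          D.indicator (fun _ => (1:ℝ)) (combine (Y ω) (Z ω)) ∂μ
        = ∫ ω, F (Y ω, Z ω) ∂μ := by
      rw [← integral_indicator hs_meas]
      congr 1
      funext ω
      rw [Set.indicator_apply]
      simp only [hFdef, Set.mem_preimage, Set.indicator_apply]
      by_cases h : X j₀ ω i₀ ∈ B
      · rw [if_pos h, if_pos (show Y ω i₀ ∈ B from h), one_mul]
      · rw [if_neg h, if_neg (show Y ω i₀ ∉ B from h), zero_mul]
    have e2 : ∫ ω, F (Y ω, Z ω) ∂μ = ∫ q, F q ∂((μ.map Y).prod (μ.map Z)) := by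
      rw [← hlaw]
      exact (integral_map (hYmeas.prodMk hZmeas).aemeasurable
        hF_meas.aestronglyMeasurable).symm
    have e3 : ∫ q, F q ∂((μ.map Y).prod (μ.map Z))
        = ∫ y, B.indicator (fun _ => (1:ℝ)) (y i₀) * gfun y ∂(μ.map Y) := by
      rw [integral_prod F hF_int]
      congr 1
      funext y
      simp only [hFdef, hgdef]
      rw [integral_const_mul]
    have e4 : ∫ y, B.indicator (fun _ => (1:ℝ)) (y i₀) * gfun y ∂(μ.map Y)
        = ∫ ω, B.indicator (fun _ => (1:ℝ)) (Y ω i₀) * gfun (Y ω) ∂μ :=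
      integral_map hYmeas.aemeasurable
        (((measurable_const.indicator hB).comp (measurable_pi_apply i₀)).mul
          hg_meas).aestronglyMeasurable
    have e5 : ∫ ω, B.indicator (fun _ => (1:ℝ)) (Y ω i₀) * gfun (Y ω) ∂μ
        = ∫ ω in ((fun ω => X j₀ ω i₀) ⁻¹' B), gfun (Y ω) ∂μ := by
      rw [← integral_indicator hs_meas]
      congr 1
      funext ω
      rw [Set.indicator_apply]
      simp only [Set.mem_preimage, Set.indicator_apply]
      by_cases h : X j₀ ω i₀ ∈ B
      · rw [if_pos h, if_pos (show Y ω i₀ ∈ B from h), one_mul]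
      · rw [if_neg h, if_neg (show Y ω i₀ ∉ B from h), zero_mul]
    rw [e1, e2, e3, e4, e5]
  -- monotone representation
  have hPR : ∀ D' : Set (Fin (m j₀) → ℝ), MeasurableSet D' →
      (∀ a b, a ∈ D' → a ≤ b → b ∈ D') →
      ∃ φ : ℝ → ℝ, Monotone φ ∧
        (μ[fun ω => D'.indicator (fun _ => (1:ℝ)) (Y ω) | MeasurableSpace.comap ξ inferInstance] =ᵐ[μ] fun ω => φ (ξ ω)) :=
    fun D' h1 h2 => hprds j₀ D' h1 h2 i₀ hi
  obtain ⟨φ, hφmono, hφae⟩ := exists_monotone_rep μ hYmeas hm' hPR hg_meas hgmono hg0 hg1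
  refine ⟨φ, hφmono, ?_⟩
  have hfe : (fun ω => D.indicator (fun _ => (1:ℝ)) (fun p : Σ j, Fin (m j) => X p.1 ω p.2))
      = fun ω => D.indicator (fun _ => (1:ℝ)) (combine (Y ω) (Z ω)) := by
    funext ω; rw [hXfull ω]
  show μ[(fun ω => D.indicator (fun _ => (1:ℝ))
      (fun p : Σ j, Fin (m j) => X p.1 ω p.2)) | MeasurableSpace.comap ξ inferInstance] =ᵐ[μ] fun ω => φ (ξ ω)
  rw [hfe]
  exact hkey.symm.trans hφae
end

section
/- If p_1, …, p_m are p-values such that the vector (p_1,…,p_m) is PRDS on the set of true null indices H_0, and each null p-value is super-uniform (P(p_i ≤ t) ≤ t for i ∈ H_0), then the Benjamini–Hochberg procedure at level α has FDR at most α·|H_0|/m ≤ α. -/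
open MeasureTheory ProbabilityTheory

/-- Number of rejections of the BH procedure at level `α`:
`k* = max { k ≤ m : #{i : p_i ≤ α k / m} ≥ k }` (this equals the step-up count). -/
noncomputable def bhCount (m : ℕ) (α : ℝ) (p : Fin m → ℝ) : ℕ :=
  sSup {k : ℕ | k ≤ m ∧ k ≤ Nat.card {i : Fin m // p i ≤ α * k / m}}

namespace BHProof


variable {m : ℕ} {α : ℝ}

def bhSet (m : ℕ) (α : ℝ) (x : Fin m → ℝ) : Set ℕ :=
  {k : ℕ | k ≤ m ∧ k ≤ Nat.card {i : Fin m // x i ≤ α * k / m}}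

lemma bhCount_def (x : Fin m → ℝ) : bhCount m α x = sSup (bhSet m α x) := rfl

lemma mem0 (x : Fin m → ℝ) : (0 : ℕ) ∈ bhSet m α x := ⟨Nat.zero_le _, Nat.zero_le _⟩

lemma bhBdd (x : Fin m → ℝ) : BddAbove (bhSet m α x) := ⟨m, fun _ hk => hk.1⟩

lemma bhCount_le_m (x : Fin m → ℝ) : bhCount m α x ≤ m :=
  csSup_le ⟨0, mem0 x⟩ fun _ hk => hk.1

lemma bhCount_mem (x : Fin m → ℝ) : bhCount m α x ∈ bhSet m α x :=
  Nat.sSup_mem ⟨0, mem0 x⟩ (bhBdd x)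

lemma natCard_le_iff {c : ℝ} {k : ℕ} (x : Fin m → ℝ) :
    k ≤ Nat.card {i : Fin m // x i ≤ c} ↔
      ∃ s : Finset (Fin m), s.card = k ∧ ∀ i ∈ s, x i ≤ c := by
  classical
  rw [Nat.card_eq_fintype_card, Fintype.card_subtype]
  constructor
  · intro h
    obtain ⟨s, hs, hcard⟩ := Finset.exists_subset_card_eq h
    exact ⟨s, hcard, fun i hi => (Finset.mem_filter.1 (hs hi)).2⟩
  · rintro ⟨s, rfl, hs⟩
    exact Finset.card_le_card fun i hi =>
      Finset.mem_filter.2 ⟨Finset.mem_univ _, hs i hi⟩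

lemma measurableSet_card_le (c : ℝ) (k : ℕ) :
    MeasurableSet {x : Fin m → ℝ | k ≤ Nat.card {i : Fin m // x i ≤ c}} := by
  have h : {x : Fin m → ℝ | k ≤ Nat.card {i : Fin m // x i ≤ c}}
      = ⋃ s ∈ {s : Finset (Fin m) | s.card = k}, ⋂ i ∈ s, {x : Fin m → ℝ | x i ≤ c} := by
    ext x
    simp only [Set.mem_setOf_eq, Set.mem_iUnion, Set.mem_iInter, natCard_le_iff]
    constructor
    · rintro ⟨s, h1, h2⟩; exact ⟨s, h1, h2⟩
    · rintro ⟨s, h1, h2⟩; exact ⟨s, h1, h2⟩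
  rw [h]
  exact MeasurableSet.biUnion (Set.to_countable _) fun s _ =>
    MeasurableSet.biInter (Set.to_countable _) fun i _ =>
      measurableSet_le (measurable_pi_apply i) measurable_const

lemma bhCount_antitone {x y : Fin m → ℝ} (hxy : x ≤ y) :
    bhCount m α y ≤ bhCount m α x := by
  apply csSup_le_csSup (bhBdd x) ⟨0, mem0 y⟩
  rintro k ⟨hk1, hk2⟩
  refine ⟨hk1, le_trans hk2 ?_⟩
  apply Nat.card_le_card_of_injective
    (fun j : {i : Fin m // y i ≤ α * k / m} =>
      (⟨j.1, le_trans (hxy j.1) j.2⟩ : {i : Fin m // x i ≤ α * k / m}))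
  intro a b hab
  simpa [Subtype.ext_iff] using hab

lemma bhCount_ge_iff (x : Fin m → ℝ) (k : ℕ) :
    k ≤ bhCount m α x ↔ ∃ j ∈ bhSet m α x, k ≤ j := by
  constructor
  · intro h; exact ⟨bhCount m α x, bhCount_mem x, h⟩
  · rintro ⟨j, hj, hkj⟩; exact le_trans hkj (le_csSup (bhBdd x) hj)

lemma measurableSet_bhCount_ge (k : ℕ) :
    MeasurableSet {x : Fin m → ℝ | k ≤ bhCount m α x} := by
  have h : {x : Fin m → ℝ | k ≤ bhCount m α x}
      = ⋃ j ∈ Finset.Icc k m,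
          {x : Fin m → ℝ | j ≤ Nat.card {i : Fin m // x i ≤ α * j / m}} := by
    ext x
    simp only [Set.mem_setOf_eq, Set.mem_iUnion, Finset.mem_Icc, bhCount_ge_iff]
    constructor
    · rintro ⟨j, ⟨hjm, hjc⟩, hkj⟩; exact ⟨j, ⟨hkj, hjm⟩, hjc⟩
    · rintro ⟨j, ⟨hkj, hjm⟩, hjc⟩; exact ⟨j, ⟨hjm, hjc⟩, hkj⟩
  rw [h]
  exact MeasurableSet.biUnion (Set.to_countable _) fun j _ => measurableSet_card_le _ _

lemma measurable_bhCount : Measurable (bhCount m α) := by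
  apply measurable_to_countable'
  intro k
  have h : bhCount m α ⁻¹' {k}
      = {x : Fin m → ℝ | k ≤ bhCount m α x} \ {x : Fin m → ℝ | k + 1 ≤ bhCount m α x} := by
    ext x
    simp only [Set.mem_preimage, Set.mem_singleton_iff, Set.mem_diff, Set.mem_setOf_eq]
    omega
  rw [h]
  exact (measurableSet_bhCount_ge k).diff (measurableSet_bhCount_ge (k + 1))

/-- `{x | k ≤ bhCount x}` is a lower set. -/
lemma bhCount_ge_lower {x y : Fin m → ℝ} (hxy : x ≤ y) {k : ℕ}
    (hy : k ≤ bhCount m α y) : k ≤ bhCount m α x :=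
  le_trans hy (bhCount_antitone hxy)



/-- Abstract telescoping/induction lemma behind the BY proof. -/
lemma tele (n : ℕ) (c : ℝ) (hc : 0 ≤ c) (B C F : ℕ → ℝ)
    (hC0 : ∀ k, 1 ≤ k → k ≤ n → 0 ≤ C k)
    (hCB : ∀ k, 1 ≤ k → k ≤ n → C k ≤ B k)
    (hBF : ∀ k, 1 ≤ k → k ≤ n → B k ≤ F k)
    (hF : ∀ k, 1 ≤ k → k ≤ n → F k ≤ c * k)
    (hFmono : ∀ k, 1 ≤ k → k < n → F k ≤ F (k + 1))
    (hKI : ∀ k, 1 ≤ k → k < n → B (k + 1) * F k ≤ C k * F (k + 1))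
    (hlast : C n = 0) :
    ∑ k ∈ Finset.Icc 1 n, (B k - C k) / k ≤ c := by
  rcases Nat.eq_zero_or_pos n with hn | hn
  · subst hn; simp [hc]
  classical
  set ρ : ℕ → ℝ := fun k => if k ≤ n then (if 0 < F k then B k / F k else 1) else 0 with hρ
  have hρ1 : ∀ k, 1 ≤ k → ρ k ≤ 1 := by
    intro k hk
    by_cases h1 : k ≤ n
    · by_cases h2 : 0 < F k
      · simp only [hρ, h1, if_true, h2]
        exact div_le_one_of_le₀ (hBF k hk h1) (le_of_lt h2)
      · simp [hρ, h1, h2]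
    · simp [hρ, h1]
  have hρ0 : ∀ k, 1 ≤ k → 0 ≤ ρ k := by
    intro k hk
    by_cases h1 : k ≤ n
    · by_cases h2 : 0 < F k
      · simp only [hρ, h1, if_true, h2]
        exact div_nonneg (le_trans (hC0 k hk h1) (hCB k hk h1)) (le_of_lt h2)
      · simp [hρ, h1, h2]
    · simp [hρ, h1]
  -- key: C k ≥ F k * ρ (k+1)
  have hCρ : ∀ k, 1 ≤ k → k ≤ n → F k * ρ (k + 1) ≤ C k := by
    intro k hk hkn
    rcases eq_or_lt_of_le hkn with rfl | hklt
    · have : ¬ (k + 1 ≤ k) := by omega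
      simp [hρ, this, hlast]
    · have hk1n : k + 1 ≤ n := hklt
      by_cases h2 : 0 < F (k + 1)
      · simp only [hρ, hk1n, if_true, h2]
        rw [mul_div_assoc'] at *
        rw [div_le_iff₀ h2]
        calc F k * B (k + 1) = B (k + 1) * F k := by ring
          _ ≤ C k * F (k + 1) := hKI k hk hklt
      · have hFk1 : F (k + 1) = 0 := by
          have h0 : 0 ≤ F (k + 1) :=
            le_trans (le_trans (hC0 _ (by omega) hk1n) (hCB _ (by omega) hk1n)) (hBF _ (by omega) hk1n)
          cases lt_or_eq_of_le h0 with
          | inl h => exact absurd h h2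
          | inr h => exact h.symm
        have hFk : F k = 0 := by
          have h0 : 0 ≤ F k := le_trans (le_trans (hC0 k hk hkn) (hCB k hk hkn)) (hBF k hk hkn)
          have := hFmono k hk hklt
          linarith
        rw [hFk]
        simpa using hC0 k hk hkn
  -- step lemma
  have step : ∀ k, 1 ≤ k → k ≤ n → (B k - C k) / k + c * ρ (k + 1) ≤ c * ρ k := by
    intro k hk hkn
    have hkpos : (0 : ℝ) < k := by exact_mod_cast hk
    by_cases h2 : 0 < F k
    · have h1 : (B k - C k) / k ≤ c * (B k - C k) / F k := by
        rw [div_le_div_iff₀ hkpos h2]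
        have hBC : 0 ≤ B k - C k := by linarith [hCB k hk hkn]
        nlinarith [hF k hk hkn]
      have h2' : c * ρ (k + 1) ≤ c * (C k / F k) := by
        apply mul_le_mul_of_nonneg_left _ hc
        rw [le_div_iff₀ h2]
        calc ρ (k + 1) * F k = F k * ρ (k + 1) := by ring
          _ ≤ C k := hCρ k hk hkn
      have : c * ρ k = c * (B k / F k) := by simp [hρ, hkn, h2]
      rw [this]
      have : c * (B k - C k) / F k + c * (C k / F k) = c * (B k / F k) := by
        field_simp; ring
      linarith
    · have hFk : F k = 0 := by
        have h0 : 0 ≤ F k := le_trans (le_trans (hC0 k hk hkn) (hCB k hk hkn)) (hBF k hk hkn)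
        cases lt_or_eq_of_le h0 with
        | inl h => exact absurd h h2
        | inr h => exact h.symm
      have hBk : B k = 0 := le_antisymm (by linarith [hBF k hk hkn]) (le_trans (hC0 k hk hkn) (hCB k hk hkn))
      have hCk : C k = 0 := le_antisymm (by linarith [hCB k hk hkn]) (hC0 k hk hkn)
      have : c * ρ k = c * 1 := by simp [hρ, hkn, h2]
      rw [this, hBk, hCk]
      simp only [sub_zero, zero_div, zero_add]
      exact mul_le_mul_of_nonneg_left (hρ1 (k + 1) (by omega)) hc
  -- main induction
  have main : ∀ j, j ≤ n → ∑ k ∈ Finset.Icc (n - j + 1) n, (B k - C k) / k ≤ c * ρ (n - j + 1) := by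
    intro j
    induction j with
    | zero =>
      intro _
      have h1 : Finset.Icc (n - 0 + 1) n = ∅ := by
        apply Finset.Icc_eq_empty; omega
      have h2 : ¬ (n - 0 + 1 ≤ n) := by omega
      simp [h1, hρ, h2]
    | succ j ih =>
      intro hjn
      have hk0 : n - (j + 1) + 1 = n - j := by omega
      set k0 := n - j with hk0def
      have hk01 : 1 ≤ k0 := by omega
      have hk0n : k0 ≤ n := by omega
      rw [hk0]
      have hins : Finset.Icc k0 n = insert k0 (Finset.Icc (k0 + 1) n) := by
        rw [Finset.Icc_add_one_left_eq_Ioc, Finset.Ioc_insert_left hk0n]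
      rw [hins, Finset.sum_insert (by simp)]
      have ihh := ih (by omega)
      have : n - j + 1 = k0 + 1 := by omega
      rw [this] at ihh
      calc (B k0 - C k0) / k0 + ∑ k ∈ Finset.Icc (k0 + 1) n, (B k - C k) / k
          ≤ (B k0 - C k0) / k0 + c * ρ (k0 + 1) := by linarith
        _ ≤ c * ρ k0 := step k0 hk01 hk0n
  have := main n le_rfl
  have h1 : n - n + 1 = 1 := by omega
  rw [h1] at this
  calc ∑ k ∈ Finset.Icc 1 n, (B k - C k) / k ≤ c * ρ 1 := this
    _ ≤ c * 1 := mul_le_mul_of_nonneg_left (hρ1 1 le_rfl) hc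
    _ = c := mul_one c



lemma key_ineq {Ω : Type*} [mΩ : MeasurableSpace Ω] (μ : Measure Ω) [IsProbabilityMeasure μ]
    {m : ℕ} {p : Ω → Fin m → ℝ} (hp : Measurable p) (i : Fin m)
    {E : Set (Fin m → ℝ)} (hEm : MeasurableSet E)
    (hElow : ∀ a b : Fin m → ℝ, a ≤ b → b ∈ E → a ∈ E)
    {φ : ℝ → ℝ} (hφ : Monotone φ)
    (hcond : μ[fun ω => Eᶜ.indicator (fun _ => (1 : ℝ)) (p ω) |
        MeasurableSpace.comap (fun ω => p ω i) inferInstance] =ᵐ[μ] fun ω => φ (p ω i))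
    {s s' : ℝ} (hss : s ≤ s') :
    (μ ((p ⁻¹' E) ∩ {ω | p ω i ≤ s'})).toReal * (μ {ω | p ω i ≤ s}).toReal
      ≤ (μ ((p ⁻¹' E) ∩ {ω | p ω i ≤ s})).toReal * (μ {ω | p ω i ≤ s'}).toReal := by
  classical
  have hpi : Measurable (fun ω => p ω i) := (measurable_pi_apply i).comp hp
  have hm' : MeasurableSpace.comap (fun ω => p ω i) inferInstance ≤ mΩ := hpi.comap_le
  set f : Ω → ℝ := fun ω => Eᶜ.indicator (fun _ => (1 : ℝ)) (p ω) with hfdef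
  set gE : Ω → ℝ := fun ω => E.indicator (fun _ => (1 : ℝ)) (p ω) with hgEdef
  have hfmeas : Measurable f := (measurable_const.indicator hEm.compl).comp hp
  have hgEmeas : Measurable gE := (measurable_const.indicator hEm).comp hp
  have hfint : Integrable f μ := by
    refine ⟨hfmeas.aestronglyMeasurable, ?_⟩
    apply (hasFiniteIntegral_const (1 : ℝ)).mono'
    filter_upwards with ω
    simp only [hfdef, Set.indicator]
    split_ifs <;> simp
  have hgEint : Integrable gE μ := by
    refine ⟨hgEmeas.aestronglyMeasurable, ?_⟩
    apply (hasFiniteIntegral_const (1 : ℝ)).mono'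
    filter_upwards with ω
    simp only [hgEdef, Set.indicator]
    split_ifs <;> simp
  have hsum : gE = (fun _ => (1 : ℝ)) - f := by
    funext ω
    simp only [hgEdef, hfdef, Pi.sub_apply, Set.indicator, Set.mem_compl_iff]
    by_cases h : p ω ∈ E <;> simp [h]
  -- conditional expectation of gE
  have hcondgE : μ[gE | MeasurableSpace.comap (fun ω => p ω i) inferInstance] =ᵐ[μ] fun ω => 1 - φ (p ω i) := by
    have h1 : μ[gE | MeasurableSpace.comap (fun ω => p ω i) inferInstance] =ᵐ[μ] μ[(fun _ => (1 : ℝ))| MeasurableSpace.comap (fun ω => p ω i) inferInstance] - μ[f | MeasurableSpace.comap (fun ω => p ω i) inferInstance] := by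
      rw [hsum]
      exact condExp_sub (integrable_const 1) hfint _
    have h2 : μ[(fun _ => (1 : ℝ)) | MeasurableSpace.comap (fun ω => p ω i) inferInstance] = fun _ => (1 : ℝ) := condExp_const (μ := μ) hm' (1 : ℝ)
    filter_upwards [h1, hcond] with ω hω1 hω2
    rw [hω1]
    simp only [Pi.sub_apply, h2]
    rw [hω2]
  -- truncation
  set ψ : ℝ → ℝ := fun t => max 0 (min (1 - φ t) 1) with hψdef
  have hψanti : Antitone ψ := by
    apply Antitone.max antitone_const
    apply Antitone.min _ antitone_const
    intro a b hab
    simp only [sub_le_sub_iff_left]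
    exact hφ hab
  have hψ01 : ∀ t, 0 ≤ ψ t ∧ ψ t ≤ 1 := fun t =>
    ⟨le_max_left _ _, max_le (by norm_num) (min_le_right _ _)⟩
  have hae : (fun ω => ψ (p ω i)) =ᵐ[μ] μ[gE | MeasurableSpace.comap (fun ω => p ω i) inferInstance] := by
    have h0 : 0 ≤ᵐ[μ] μ[gE | MeasurableSpace.comap (fun ω => p ω i) inferInstance] := by
      apply condExp_nonneg
      filter_upwards with ω
      simp only [hgEdef, Set.indicator]
      split_ifs <;> norm_num
    have h1 : μ[gE | MeasurableSpace.comap (fun ω => p ω i) inferInstance] ≤ᵐ[μ] fun _ => (1 : ℝ) := by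
      have := condExp_mono (μ := μ) (m := MeasurableSpace.comap (fun ω => p ω i) inferInstance) hgEint (integrable_const 1)
        (by filter_upwards with ω; simp only [hgEdef, Set.indicator]; split_ifs <;> norm_num)
      rw [condExp_const (μ := μ) hm' (1 : ℝ)] at this
      exact this
    filter_upwards [hcondgE, h0, h1] with ω hω h0ω h1ω
    rw [hω] at h0ω h1ω ⊢
    simp only [Pi.zero_apply] at h0ω
    simp only [hψdef]
    rw [min_eq_left h1ω, max_eq_right h0ω]
  -- set integral identity
  have hint : ∀ r : ℝ, ∫ ω in {ω | p ω i ≤ r}, ψ (p ω i) ∂μ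
      = (μ ((p ⁻¹' E) ∩ {ω | p ω i ≤ r})).toReal := by
    intro r
    have hAm' : MeasurableSet[MeasurableSpace.comap (fun ω => p ω i) inferInstance] {ω | p ω i ≤ r} := ⟨Set.Iic r, measurableSet_Iic, rfl⟩
    have e1 : ∫ ω in {ω | p ω i ≤ r}, ψ (p ω i) ∂μ
        = ∫ ω in {ω | p ω i ≤ r}, (μ[gE | MeasurableSpace.comap (fun ω => p ω i) inferInstance]) ω ∂μ := by
      apply setIntegral_congr_ae (hm' _ hAm')
      filter_upwards [hae] with ω hω _
      exact hω
    have e2 : ∫ ω in {ω | p ω i ≤ r}, (μ[gE | MeasurableSpace.comap (fun ω => p ω i) inferInstance]) ω ∂μ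
        = ∫ ω in {ω | p ω i ≤ r}, gE ω ∂μ :=
      setIntegral_condExp hm' hgEint hAm'
    have e3 : ∫ ω in {ω | p ω i ≤ r}, gE ω ∂μ
        = (μ ((p ⁻¹' E) ∩ {ω | p ω i ≤ r})).toReal := by
      have : ∀ ω, gE ω = (p ⁻¹' E).indicator (fun _ => (1 : ℝ)) ω := by
        intro ω
        simp only [hgEdef, Set.indicator, Set.mem_preimage]
      simp_rw [this]
      rw [setIntegral_indicator (hp hEm)]
      rw [setIntegral_const]
      rw [Set.inter_comm]
      simp
      rfl
    rw [e1, e2, e3]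
  -- final comparison
  set A : Set Ω := {ω | p ω i ≤ s} with hAdef
  set A' : Set Ω := {ω | p ω i ≤ s'} with hA'def
  set B : Set Ω := A' \ A with hBdef
  have hAmeas : MeasurableSet A := hpi measurableSet_Iic
  have hA'meas : MeasurableSet A' := hpi measurableSet_Iic
  have hBmeas : MeasurableSet B := hA'meas.diff hAmeas
  have hAA' : A ⊆ A' := fun ω hω => le_trans hω hss
  have hA'union : A' = A ∪ B := by
    rw [hBdef, Set.union_diff_cancel hAA']
  have hdisj : Disjoint A B := Set.disjoint_sdiff_right
  set g : Ω → ℝ := fun ω => ψ (p ω i) with hgdef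
  have hgmeas : Measurable g := (hψanti.measurable).comp hpi
  have hgint : Integrable g μ := by
    refine ⟨hgmeas.aestronglyMeasurable, ?_⟩
    apply (hasFiniteIntegral_const (1 : ℝ)).mono'
    filter_upwards with ω
    rw [Real.norm_eq_abs, abs_of_nonneg (hψ01 _).1]
    exact (hψ01 _).2
  have hsplit : ∫ ω in A', g ω ∂μ = ∫ ω in A, g ω ∂μ + ∫ ω in B, g ω ∂μ := by
    rw [hA'union]
    exact setIntegral_union hdisj hBmeas hgint.integrableOn hgint.integrableOn
  have hμsplit : (μ A').toReal = (μ A).toReal + (μ B).toReal := by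
    rw [hA'union, measure_union hdisj hBmeas]
    rw [ENNReal.toReal_add (measure_ne_top μ A) (measure_ne_top μ B)]
  have hbound1 : ψ s * (μ A).toReal ≤ ∫ ω in A, g ω ∂μ := by
    have : ∫ ω in A, ψ s ∂μ ≤ ∫ ω in A, g ω ∂μ := by
      apply setIntegral_mono_on (integrableOn_const (measure_ne_top μ A))
        hgint.integrableOn hAmeas
      intro ω hω
      exact hψanti hω
    rw [setIntegral_const] at this
    rw [smul_eq_mul, mul_comm] at this
    exact this
  have hbound2 : ∫ ω in B, g ω ∂μ ≤ ψ s * (μ B).toReal := by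
    have : ∫ ω in B, g ω ∂μ ≤ ∫ ω in B, ψ s ∂μ := by
      apply setIntegral_mono_on hgint.integrableOn
        (integrableOn_const (measure_ne_top μ B)) hBmeas
      intro ω hω
      have : s ≤ p ω i := le_of_not_ge hω.2
      exact hψanti this
    rw [setIntegral_const, smul_eq_mul, mul_comm] at this
    exact this
  have ha := hint s
  have ha' := hint s'
  rw [← hAdef] at ha
  rw [← hA'def] at ha'
  rw [← ha, ← ha', hsplit, hμsplit]
  have hψs0 : 0 ≤ ψ s := (hψ01 s).1
  have hμA0 : 0 ≤ (μ A).toReal := ENNReal.toReal_nonneg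
  have hμB0 : 0 ≤ (μ B).toReal := ENNReal.toReal_nonneg
  nlinarith [hbound1, hbound2]


end BHProof

/-- Benjamini–Yekutieli: under PRDS on the true nulls and super-uniform null p-values,
the BH procedure at level `α` has FDR at most `α |H₀| / m`. -/
theorem bh_fdr_control_of_prds
    {Ω : Type*} [MeasurableSpace Ω] (μ : Measure Ω) [IsProbabilityMeasure μ]
    (m : ℕ) (hm : 0 < m) (p : Ω → Fin m → ℝ) (hp : Measurable p)
    (H0 : Finset (Fin m)) (α : ℝ) (hα : 0 < α) (hα1 : α ≤ 1)
    (hPRDS : PRDS μ p (H0 : Set (Fin m)))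
    (hsuper : ∀ i ∈ H0, ∀ t : ℝ, 0 ≤ t → t ≤ 1 →
      μ {ω | p ω i ≤ t} ≤ ENNReal.ofReal t) :
    ∫ ω, (Nat.card {i : Fin m // i ∈ H0 ∧
            p ω i ≤ α * (bhCount m α (p ω)) / m} : ℝ)
          / max (bhCount m α (p ω) : ℝ) 1 ∂μ
      ≤ α * H0.card / m := by
  classical
  have hmR : (0 : ℝ) < m := by exact_mod_cast hm
  have hpi : ∀ i : Fin m, Measurable fun ω => p ω i :=
    fun i => (measurable_pi_apply i).comp hp
  have hKmeas : Measurable fun ω => bhCount m α (p ω) :=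
    BHProof.measurable_bhCount.comp hp
  have hKle : ∀ ω, bhCount m α (p ω) ≤ m := fun ω => BHProof.bhCount_le_m (p ω)
  have hAmeas : ∀ (i : Fin m) (k : ℕ),
      MeasurableSet ({ω | bhCount m α (p ω) = k} ∩ {ω | p ω i ≤ α * k / m}) :=
    fun i k => (hKmeas (measurableSet_singleton k)).inter ((hpi i) measurableSet_Iic)
  -- pointwise decomposition of the integrand
  have hpt : ∀ ω, (Nat.card {i : Fin m // i ∈ H0 ∧
            p ω i ≤ α * (bhCount m α (p ω)) / m} : ℝ)
          / max (bhCount m α (p ω) : ℝ) 1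
      = ∑ i ∈ H0, ∑ k ∈ Finset.range (m + 1),
          ({ω | bhCount m α (p ω) = k} ∩ {ω | p ω i ≤ α * k / m}).indicator
            (fun _ => 1 / max (k : ℝ) 1) ω := by
    intro ω
    have hcard : (Nat.card {i : Fin m // i ∈ H0 ∧
          p ω i ≤ α * (bhCount m α (p ω)) / m} : ℝ)
        = ∑ i ∈ H0, if p ω i ≤ α * (bhCount m α (p ω)) / m then (1 : ℝ) else 0 := by
      rw [Nat.card_eq_fintype_card, Fintype.card_subtype]
      have he : (Finset.filter (fun i =>
            i ∈ H0 ∧ p ω i ≤ α * (bhCount m α (p ω)) / m) Finset.univ)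
          = H0.filter (fun i => p ω i ≤ α * (bhCount m α (p ω)) / m) := by
        ext j
        simp [Finset.mem_filter]
      rw [he, Finset.card_filter]
      push_cast
      rfl
    rw [hcard, Finset.sum_div]
    apply Finset.sum_congr rfl
    intro i _
    have hk0mem : bhCount m α (p ω) ∈ Finset.range (m + 1) :=
      Finset.mem_range.2 (Nat.lt_succ_of_le (hKle ω))
    rw [Finset.sum_eq_single_of_mem (bhCount m α (p ω)) hk0mem]
    · simp only [Set.indicator_apply, Set.mem_inter_iff, Set.mem_setOf_eq]
      by_cases h : p ω i ≤ α * (bhCount m α (p ω)) / m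
      · simp [h]
      · simp [h]
    · intro k _ hkne
      apply Set.indicator_of_notMem
      simp only [Set.mem_inter_iff, Set.mem_setOf_eq]
      intro hc
      exact hkne (hc.1.symm)
  -- integral computation
  have hintegral : ∫ ω, (Nat.card {i : Fin m // i ∈ H0 ∧
            p ω i ≤ α * (bhCount m α (p ω)) / m} : ℝ)
          / max (bhCount m α (p ω) : ℝ) 1 ∂μ
      = ∑ i ∈ H0, ∑ k ∈ Finset.range (m + 1),
          (1 / max (k : ℝ) 1) *
            (μ ({ω | bhCount m α (p ω) = k} ∩ {ω | p ω i ≤ α * k / m})).toReal := by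
    rw [integral_congr_ae (Filter.Eventually.of_forall hpt)]
    rw [integral_finset_sum _ (fun i _ =>
      integrable_finset_sum _ (fun k _ =>
        (integrable_const _).indicator (hAmeas i k)))]
    apply Finset.sum_congr rfl
    intro i _
    rw [integral_finset_sum _ (fun k _ => (integrable_const _).indicator (hAmeas i k))]
    apply Finset.sum_congr rfl
    intro k _
    rw [integral_indicator_const _ (hAmeas i k)]
    rw [smul_eq_mul, mul_comm]
    rfl
  rw [hintegral]
  -- per-i bound
  have hperi : ∀ i ∈ H0, ∑ k ∈ Finset.range (m + 1),
      (1 / max (k : ℝ) 1) *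
        (μ ({ω | bhCount m α (p ω) = k} ∩ {ω | p ω i ≤ α * k / m})).toReal
      ≤ α / m := by
    intro i hi
    have hrange : Finset.range (m + 1) = insert 0 (Finset.Icc 1 m) := by
      ext k
      simp only [Finset.mem_range, Finset.mem_insert, Finset.mem_Icc]
      omega
    rw [hrange, Finset.sum_insert (by simp)]
    -- the k = 0 term vanishes
    have h0 : (μ ({ω | bhCount m α (p ω) = 0} ∩ {ω | p ω i ≤ α * (0 : ℕ) / m})).toReal
        = 0 := by
      have hsub : ({ω | bhCount m α (p ω) = 0} ∩ {ω | p ω i ≤ α * (0 : ℕ) / m})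
          ⊆ {ω | p ω i ≤ (0 : ℝ)} := by
        intro ω hω
        have h2 := hω.2
        simpa using h2
      have hz : μ {ω | p ω i ≤ (0 : ℝ)} = 0 := by
        have := hsuper i hi 0 le_rfl zero_le_one
        simpa using this
      have hzz : μ ({ω | bhCount m α (p ω) = 0} ∩ {ω | p ω i ≤ α * (0 : ℕ) / m}) = 0 :=
        le_antisymm (le_trans (measure_mono hsub) (le_of_eq hz)) zero_le
      rw [hzz]
      simp
    rw [h0, mul_zero, zero_add]
    -- notation for the telescoping data
    set B : ℕ → ℝ := fun k =>
      (μ ({ω | k ≤ bhCount m α (p ω)} ∩ {ω | p ω i ≤ α * k / m})).toReal with hB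
    set C : ℕ → ℝ := fun k =>
      (μ ({ω | k + 1 ≤ bhCount m α (p ω)} ∩ {ω | p ω i ≤ α * k / m})).toReal with hC
    set F : ℕ → ℝ := fun k => (μ {ω | p ω i ≤ α * k / m}).toReal with hF
    have hq01 : ∀ k : ℕ, k ≤ m → 0 ≤ α * k / m ∧ α * k / m ≤ 1 := by
      intro k hk
      constructor
      · positivity
      · have h1 : α * k ≤ α * m := by
          apply mul_le_mul_of_nonneg_left _ hα.le
          exact_mod_cast hk
        have h2 : α * m / m = α := by field_simp
        calc α * k / m ≤ α * m / m := by
              apply div_le_div_of_nonneg_right h1 hmR.le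
          _ = α := h2
          _ ≤ 1 := hα1
    have hqmono : ∀ k : ℕ, α * k / m ≤ α * (k + 1 : ℕ) / m := by
      intro k
      apply div_le_div_of_nonneg_right _ hmR.le
      apply mul_le_mul_of_nonneg_left _ hα.le
      push_cast
      linarith
    have hEΩmeas : ∀ k : ℕ, MeasurableSet {ω | k ≤ bhCount m α (p ω)} :=
      fun k => hKmeas (show MeasurableSet {n : ℕ | k ≤ n} from trivial)
    -- identification of the terms as B k - C k
    have hterm : ∀ k, 1 ≤ k → k ≤ m →
        (μ ({ω | bhCount m α (p ω) = k} ∩ {ω | p ω i ≤ α * k / m})).toReal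
          = B k - C k := by
      intro k _ _
      have hdec : ({ω | bhCount m α (p ω) = k} ∩ {ω | p ω i ≤ α * k / m})
          = ({ω | k ≤ bhCount m α (p ω)} ∩ {ω | p ω i ≤ α * k / m})
            \ ({ω | k + 1 ≤ bhCount m α (p ω)} ∩ {ω | p ω i ≤ α * k / m}) := by
        ext ω
        simp only [Set.mem_inter_iff, Set.mem_setOf_eq, Set.mem_diff, not_and]
        constructor
        · rintro ⟨h1, h2⟩
          exact ⟨⟨le_of_eq h1.symm, h2⟩, fun h3 => absurd h3 (by omega)⟩
        · rintro ⟨⟨h1, h2⟩, h3⟩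
          refine ⟨?_, h2⟩
          by_contra hne
          exact (h3 (by omega)) h2
      have hsub : ({ω | k + 1 ≤ bhCount m α (p ω)} ∩ {ω | p ω i ≤ α * k / m})
          ⊆ ({ω | k ≤ bhCount m α (p ω)} ∩ {ω | p ω i ≤ α * k / m}) := by
        rintro ω ⟨h1, h2⟩
        exact ⟨le_trans (Nat.le_succ k) h1, h2⟩
      rw [hdec, measure_diff hsub ((hEΩmeas (k + 1)).inter
          ((hpi i) measurableSet_Iic)).nullMeasurableSet (measure_ne_top μ _)]
      rw [ENNReal.toReal_sub_of_le (measure_mono hsub) (measure_ne_top μ _)]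
    -- apply the telescoping lemma
    have htele : ∑ k ∈ Finset.Icc 1 m, (B k - C k) / k ≤ α / m := by
      apply BHProof.tele m (α / m) (by positivity) B C F
      · intro k _ _
        exact ENNReal.toReal_nonneg
      · intro k _ _
        apply ENNReal.toReal_mono (measure_ne_top μ _)
        apply measure_mono
        rintro ω ⟨h1, h2⟩
        exact ⟨le_trans (Nat.le_succ k) h1, h2⟩
      · intro k _ _
        apply ENNReal.toReal_mono (measure_ne_top μ _)
        exact measure_mono Set.inter_subset_right
      · intro k hk1 hkm
        have hs := hsuper i hi (α * k / m) (hq01 k hkm).1 (hq01 k hkm).2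
        have hle := ENNReal.toReal_le_of_le_ofReal (hq01 k hkm).1 hs
        calc F k ≤ α * k / m := hle
          _ = α / m * k := by ring
      · intro k _ _
        apply ENNReal.toReal_mono (measure_ne_top μ _)
        apply measure_mono
        intro ω hω
        exact le_trans hω (hqmono k)
      · intro k hk1 hklt
        obtain ⟨φ, hφ, hcond⟩ := hPRDS ({x : Fin m → ℝ | k + 1 ≤ bhCount m α x})ᶜ
          (BHProof.measurableSet_bhCount_ge (k + 1)).compl
          (by
            intro a b ha hab hb
            exact ha (le_trans hb (BHProof.bhCount_antitone hab)))
          i (Finset.mem_coe.mpr hi)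
        have hki := BHProof.key_ineq μ hp i
          (BHProof.measurableSet_bhCount_ge (m := m) (α := α) (k + 1))
          (fun a b hab hb => le_trans hb (BHProof.bhCount_antitone hab)) hφ hcond (hqmono k)
        rw [Set.preimage_setOf_eq] at hki
        simp only [hB, hC, hF]
        exact hki
      · simp only [hC]
        have hempty : ({ω | m + 1 ≤ bhCount m α (p ω)} ∩ {ω | p ω i ≤ α * m / m}) = ∅ := by
          apply Set.eq_empty_iff_forall_notMem.2
          rintro ω ⟨h1, _⟩
          simp only [Set.mem_setOf_eq] at h1
          have := hKle ω
          omega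
        rw [hempty]
        simp
    calc ∑ k ∈ Finset.Icc 1 m, (1 / max (k : ℝ) 1) *
          (μ ({ω | bhCount m α (p ω) = k} ∩ {ω | p ω i ≤ α * k / m})).toReal
        = ∑ k ∈ Finset.Icc 1 m, (B k - C k) / k := by
          apply Finset.sum_congr rfl
          intro k hk
          rw [Finset.mem_Icc] at hk
          rw [hterm k hk.1 hk.2]
          rw [max_eq_left (by exact_mod_cast hk.1 : (1 : ℝ) ≤ (k : ℝ))]
          ring
      _ ≤ α / m := htele
  calc ∑ i ∈ H0, ∑ k ∈ Finset.range (m + 1),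
        (1 / max (k : ℝ) 1) *
          (μ ({ω | bhCount m α (p ω) = k} ∩ {ω | p ω i ≤ α * k / m})).toReal
      ≤ ∑ _i ∈ H0, α / m := Finset.sum_le_sum hperi
    _ = H0.card * (α / m) := by rw [Finset.sum_const, nsmul_eq_mul]
    _ = α * H0.card / m := by ring
end

section
/- Suppose random vectors (X, W) satisfy: for every permutation π in a group G, (X_π, W) ~ (X, W). Let h be a measurable function such that h(X, W) is invariant under G-permutations of X (h(X_π, W) = h(X, W) for all π ∈ G). Then conditionally on (W, h(X,W)), X is exchangeable under G: (X_π | W, h(X,W)) ~ (X | W, h(X,W)) for all π ∈ G. -/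
open MeasureTheory ProbabilityTheory

/-- If the joint law of `(X, W)` is invariant under permutations `π ∈ G` of `X`, and
`h` is a measurable function with `h(X_π, W) = h(X, W)` for all `π ∈ G`, then
conditionally on `(W, h(X, W))` the sequence `X` is exchangeable under `G`, expressed
as invariance of the joint law of `(X, W, h(X, W))` under `G`-permutations of `X`. -/
theorem cond_exchangeable_given_invariant_statistic
    {Ω 𝒳 𝒲 Θ : Type*} [MeasurableSpace Ω] [MeasurableSpace 𝒳]
    [MeasurableSpace 𝒲] [MeasurableSpace Θ]
    (μ : Measure Ω) [IsProbabilityMeasure μ]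
    (N : ℕ) (X : Fin N → Ω → 𝒳) (W : Ω → 𝒲)
    (hX : ∀ i, Measurable (X i)) (hW : Measurable W)
    (G : Subgroup (Equiv.Perm (Fin N)))
    (hinv : ∀ π ∈ G,
      Measure.map (fun ω => ((fun i => X (π i) ω), W ω)) μ
        = Measure.map (fun ω => ((fun i => X i ω), W ω)) μ)
    (h : (Fin N → 𝒳) → 𝒲 → Θ) (hh : Measurable fun p : (Fin N → 𝒳) × 𝒲 => h p.1 p.2)
    (hhinv : ∀ π ∈ G, ∀ (x : Fin N → 𝒳) (w : 𝒲), h (fun i => x (π i)) w = h x w) :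
    ∀ π ∈ G,
      Measure.map (fun ω => ((fun i => X (π i) ω), W ω, h (fun i => X i ω) (W ω))) μ
        = Measure.map (fun ω => ((fun i => X i ω), W ω, h (fun i => X i ω) (W ω))) μ := by
  intro π hπ
  set F : (Fin N → 𝒳) × 𝒲 → (Fin N → 𝒳) × 𝒲 × Θ :=
    fun p => (p.1, p.2, h p.1 p.2) with hF
  have hFmeas : Measurable F := by
    exact measurable_fst.prodMk (measurable_snd.prodMk hh)
  have hXmeas : Measurable fun ω => ((fun i => X i ω), W ω) :=
    (measurable_pi_lambda _ fun i => hX i).prodMk hW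
  have hXπmeas : Measurable fun ω => ((fun i => X (π i) ω), W ω) :=
    (measurable_pi_lambda _ fun i => hX (π i)).prodMk hW
  have h1 : (fun ω => ((fun i => X (π i) ω), W ω, h (fun i => X i ω) (W ω)))
      = F ∘ (fun ω => ((fun i => X (π i) ω), W ω)) := by
    funext ω
    simp only [F, Function.comp_apply]
    rw [hhinv π hπ (fun i => X i ω) (W ω)]
  have h2 : (fun ω => ((fun i => X i ω), W ω, h (fun i => X i ω) (W ω)))
      = F ∘ (fun ω => ((fun i => X i ω), W ω)) := rfl
  rw [h1, h2, ← Measure.map_map hFmeas hXπmeas, ← Measure.map_map hFmeas hXmeas,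
    hinv π hπ]
end
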